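/- arXiv:1907.02177 — 4 statements merged into one kernel-verified Lean document; each statement's English description precedes it below -/
import Mathlib

section
/- Let S ⊂ [0,1]^D be a compact set and γ > 0. Let 𝓘 be a finite family of closed axis-aligned hypercubes of side length γ that covers S and whose cardinality is minimal among all such covers. Then there exists a partition of 𝓘 into subfamilies 𝓘₁, …, 𝓘_{5^D} (some possibly empty) such that 𝓘 = ⋃_{i=1}^{5^D} 𝓘_i and, for every i, any two distinct hypercubes I ≠ I' in 𝓘_i satisfy d(I, I') ≥ γ, where d(A,B) := inf{‖x − y‖_∞ : x ∈ A, y ∈ B}. -/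
open MeasureTheory ProbabilityTheory Filter Matrix

noncomputable section

/-- Smallest number of closed `ℓ∞`-balls of radius `ε` needed to cover `E`
(the norm on `Fin D → ℝ` is the sup norm). -/
def coverNum {D : ℕ} (E : Set (Fin D → ℝ)) (ε : ℝ) : ℕ :=
  sInf {n : ℕ | ∃ s : Finset (Fin D → ℝ), s.card = n ∧ E ⊆ ⋃ x ∈ s, Metric.closedBall x ε}

/-- Upper Minkowski dimension of a set `E ⊆ ℝ^D`. -/
def minkowskiDim {D : ℕ} (E : Set (Fin D → ℝ)) : ℝ :=
  sInf {d : ℝ | 0 ≤ d ∧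
    Filter.limsup (fun ε : ℝ => (coverNum E ε : ℝ) * ε ^ d) (nhdsWithin 0 (Set.Ioi 0)) = 0}

/-- Support of a measure: points all of whose neighborhoods have positive measure. -/
def measSupport {D : ℕ} (μ : Measure (Fin D → ℝ)) : Set (Fin D → ℝ) :=
  {x | ∀ U ∈ nhds x, 0 < μ U}

/-- The unit cube `[0,1]^D`. -/
def unitCube (D : ℕ) : Set (Fin D → ℝ) := Set.univ.pi fun _ => Set.Icc (0:ℝ) 1

/-- The largest integer strictly smaller than `β`. -/
def hFloor (β : ℝ) : ℕ := ⌈β⌉₊ - 1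

/-- Partial derivative in the `j`-th coordinate direction. -/
def pderiv1 {D : ℕ} (j : Fin D) (f : (Fin D → ℝ) → ℝ) : (Fin D → ℝ) → ℝ :=
  fun x => fderiv ℝ f x (Pi.single j 1)

/-- Iterated partial derivative in the `j`-th direction. -/
def pderivIter {D : ℕ} (j : Fin D) : ℕ → ((Fin D → ℝ) → ℝ) → ((Fin D → ℝ) → ℝ)
  | 0 => id
  | n + 1 => fun f => pderiv1 j (pderivIter j n f)

/-- Multi-index partial derivative `∂^α f`. -/
def mDeriv {D : ℕ} (α : Fin D → ℕ) (f : (Fin D → ℝ) → ℝ) : (Fin D → ℝ) → ℝ :=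
  (List.ofFn fun j : Fin D => pderivIter j (α j)).foldr (fun op g => op g) f

/-- The Hölder ball `H(β, [0,1]^D, M)`. -/
def holderBall (D : ℕ) (β M : ℝ) : Set ((Fin D → ℝ) → ℝ) :=
  {f | ContDiffOn ℝ (hFloor β : ℕ∞) f (unitCube D) ∧
    ∃ M₁ M₂ : ℝ, 0 ≤ M₁ ∧ 0 ≤ M₂ ∧ M₁ + M₂ ≤ M ∧
      (∀ α : Fin D → ℕ, (∑ j, α j) < hFloor β →
        ∀ x ∈ unitCube D, |mDeriv α f x| ≤ M₁) ∧
      (∀ α : Fin D → ℕ, (∑ j, α j) = hFloor β →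
        ∀ x ∈ unitCube D, ∀ y ∈ unitCube D, x ≠ y →
          |mDeriv α f x - mDeriv α f y| ≤ M₂ * ‖x - y‖ ^ (β - (hFloor β : ℝ)))}

/-- A ReLU neural-network architecture with `Lm + 1` layers; layer `ℓ` (for
`0 ≤ ℓ ≤ Lm`) is the affine map `v ↦ A ℓ *ᵥ v + b ℓ` from width `p ℓ` to width
`p (ℓ+1)`; ReLU is applied after every layer except the last. -/
structure NeuralNet where
  Lm : ℕ
  p : ℕ → ℕ
  A : ∀ ℓ : ℕ, Matrix (Fin (p (ℓ + 1))) (Fin (p ℓ)) ℝ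
  b : ∀ ℓ : ℕ, Fin (p (ℓ + 1)) → ℝ

namespace NeuralNet

/-- Number of layers `L(Φ)`. -/
def depth (Φ : NeuralNet) : ℕ := Φ.Lm + 1

/-- Hidden activations. -/
def hidden (Φ : NeuralNet) : (ℓ : ℕ) → (Fin (Φ.p 0) → ℝ) → (Fin (Φ.p ℓ) → ℝ)
  | 0, x => x
  | ℓ + 1, x => fun i => max ((Φ.A ℓ *ᵥ Φ.hidden ℓ x + Φ.b ℓ) i) 0

/-- Realization `R(Φ)` of the network. -/
def realize (Φ : NeuralNet) (x : Fin (Φ.p 0) → ℝ) : Fin (Φ.p (Φ.Lm + 1)) → ℝ :=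
  Φ.A Φ.Lm *ᵥ Φ.hidden Φ.Lm x + Φ.b Φ.Lm

/-- `W(Φ)`: the number of nonzero parameters. -/
def numParams (Φ : NeuralNet) : ℕ :=
  ∑ ℓ ∈ Finset.range (Φ.Lm + 1),
    ({ij : Fin (Φ.p (ℓ + 1)) × Fin (Φ.p ℓ) | Φ.A ℓ ij.1 ij.2 ≠ 0}.ncard
      + {i : Fin (Φ.p (ℓ + 1)) | Φ.b ℓ i ≠ 0}.ncard)

/-- `B(Φ)`: the maximal absolute value of the parameters. -/
def maxParam (Φ : NeuralNet) : ℝ :=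
  sSup {r : ℝ | ∃ ℓ ≤ Φ.Lm, (∃ i j, r = |Φ.A ℓ i j|) ∨ ∃ i, r = |Φ.b ℓ i|}

end NeuralNet

/-- `F(W, L, B)`: realizations of networks with input dimension `D`, output
dimension 1, at most `W` nonzero parameters, at most `L` layers, and parameter
magnitudes at most `B`. -/
def NNclass (D : ℕ) (W L B : ℝ) : Set ((Fin D → ℝ) → ℝ) :=
  {f | ∃ (Φ : NeuralNet) (h0 : Φ.p 0 = D) (h1 : Φ.p (Φ.Lm + 1) = 1),
    (Φ.numParams : ℝ) ≤ W ∧ (Φ.depth : ℝ) ≤ L ∧ Φ.maxParam ≤ B ∧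
    ∀ x : Fin D → ℝ, f x = Φ.realize (fun i => x (Fin.cast h0 i)) (Fin.cast h1.symm 0)}

/-- Version of `F(W, L, B)` with `m`-dimensional output. -/
def NNclassM (D m : ℕ) (W L B : ℝ) : Set ((Fin D → ℝ) → Fin m → ℝ) :=
  {f | ∃ (Φ : NeuralNet) (h0 : Φ.p 0 = D) (h1 : Φ.p (Φ.Lm + 1) = m),
    (Φ.numParams : ℝ) ≤ W ∧ (Φ.depth : ℝ) ≤ L ∧ Φ.maxParam ≤ B ∧
    ∀ (x : Fin D → ℝ) (i : Fin m),
      f x i = Φ.realize (fun j => x (Fin.cast h0 j)) (Fin.cast h1.symm i)}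

/-- Covering number of a class of functions w.r.t. the `L^∞(μ)` norm. -/
def funCoverNum {D : ℕ} (ε : ℝ) (F : Set ((Fin D → ℝ) → ℝ)) (μ : Measure (Fin D → ℝ)) : ℕ :=
  sInf {n : ℕ | ∃ s : Finset ((Fin D → ℝ) → ℝ), s.card = n ∧
    ∀ f ∈ F, ∃ g ∈ s, ∀ᵐ x ∂μ, |f x - g x| ≤ ε}

/-- The (upper) regularity dimension of a measure `ν` on `X`. -/
def regularityDim {D : ℕ} (X : Set (Fin D → ℝ)) (ν : Measure (Fin D → ℝ)) : ℝ :=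
  sInf {d : ℝ | 0 < d ∧ ∃ C : ℝ, 0 < C ∧
    ∀ x ∈ measSupport ν, ∀ ε ∈ Set.Ioo (0:ℝ) 1, ∀ r : ℝ, 0 < r →
      ν (Metric.closedBall x r ∩ X) ≤
        ENNReal.ofReal (C * ε ^ (-d)) * ν (Metric.closedBall x (ε * r) ∩ X)}

/-- Distance between two sets (w.r.t. the sup norm). -/
def setDist {D : ℕ} (A B : Set (Fin D → ℝ)) : ℝ :=
  sInf {r : ℝ | ∃ x ∈ A, ∃ y ∈ B, r = ‖x - y‖}

/-- The closed axis-aligned hypercube with lower corner `a` and side length `γ`. -/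
def cornerCube {D : ℕ} (a : Fin D → ℝ) (γ : ℝ) : Set (Fin D → ℝ) :=
  Set.univ.pi fun ℓ => Set.Icc (a ℓ) (a ℓ + γ)

/-- The closed axis-aligned hypercube with center `ι` and side length `γ`. -/
def centerCube {D : ℕ} (ι : Fin D → ℝ) (γ : ℝ) : Set (Fin D → ℝ) :=
  Set.univ.pi fun ℓ => Set.Icc (ι ℓ - γ / 2) (ι ℓ + γ / 2)

/-- `I ⊕ r`: the union of open `ℓ∞`-balls of radius `r` centered in `I`. -/
def expandSet {D : ℕ} (I : Set (Fin D → ℝ)) (r : ℝ) : Set (Fin D → ℝ) :=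
  ⋃ z ∈ I, Metric.ball z r

/-- The Concentration Condition for a set `E ⊆ ℝ^K`. -/
def ConcentrationCondition {K : ℕ} (E : Set (Fin K → ℝ)) : Prop :=
  ∃ C₁ C₂ : ℝ, 0 < C₁ ∧ 0 < C₂ ∧
    ∀ ε : ℝ, 0 < ε → ∃ (T U : ℕ) (x : Fin T → (Fin K → ℝ)) (g : Fin T → Fin U),
      E ⊆ ⋃ i, Metric.closedBall (x i) ε ∧
      (∀ j : Fin U, ∀ X : Finset (Fin T), (∀ i ∈ X, g i = j) → X.Nonempty →
        X ≠ Finset.univ.filter (fun i => g i = j) →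
        ∃ i, g i = j ∧ i ∉ X ∧ ∃ k ∈ X, ‖x k - x i‖ ≤ ε) ∧
      (T : ℝ) ≤ C₁ * coverNum E ε ∧
      (U : ℝ) * Real.log (1 / ε) ≤ C₂ * coverNum E ε

/-- Smallest number of closed Euclidean (`ℓ²`) balls of radius `ε` needed to cover `E`. -/
def coverNum2 {D : ℕ} (E : Set (Fin D → ℝ)) (ε : ℝ) : ℕ :=
  sInf {n : ℕ | ∃ s : Finset (Fin D → ℝ), s.card = n ∧
    E ⊆ ⋃ x ∈ s, {y | Real.sqrt (∑ j, (y j - x j) ^ 2) ≤ ε}}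

end


section AuxCovering

theorem greedy_coloring {α : Type*} [DecidableEq α] (n : ℕ) (hn : 0 < n)
    (R : α → α → Prop) [DecidableRel R]
    (hrefl : ∀ a, R a a) (hsymm : ∀ a b, R a b → R b a)
    (I : Finset α) (hdeg : ∀ a ∈ I, (I.filter (fun b => R a b)).card ≤ n) :
    ∃ g : α → Fin n, ∀ a ∈ I, ∀ b ∈ I, a ≠ b → g a = g b → ¬ R a b := by
  classical
  induction I using Finset.induction_on with
  | empty => exact ⟨fun _ => ⟨0, hn⟩, by simp⟩
  | @insert a s ha ih =>
    obtain ⟨g, hg⟩ := ih (fun x hx => le_trans (Finset.card_le_card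
      (Finset.filter_subset_filter _ (Finset.subset_insert a s)))
      (hdeg x (Finset.mem_insert_of_mem hx)))
    set t := s.filter (fun b => R a b) with ht
    have htn : t.card < n := by
      have hsub : insert a t ⊆ (insert a s).filter (fun b => R a b) := by
        intro x hx
        rcases Finset.mem_insert.mp hx with rfl | hx
        · exact Finset.mem_filter.mpr ⟨Finset.mem_insert_self _ _, hrefl _⟩
        · have := Finset.mem_filter.mp hx
          exact Finset.mem_filter.mpr ⟨Finset.mem_insert_of_mem this.1, this.2⟩
      have hat : a ∉ t := fun h => ha (Finset.mem_of_mem_filter _ h)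
      have h1 := Finset.card_le_card hsub
      rw [Finset.card_insert_of_notMem hat] at h1
      have h2 := le_trans h1 (hdeg a (Finset.mem_insert_self _ _))
      omega
    have himg : (t.image g).card < n := lt_of_le_of_lt Finset.card_image_le htn
    obtain ⟨c, hc⟩ : ∃ c : Fin n, c ∉ t.image g := by
      by_contra h'
      push_neg at h'
      have h2 : (Finset.univ : Finset (Fin n)) ⊆ t.image g := fun c _ => h' c
      have := Finset.card_le_card h2
      rw [Finset.card_univ, Fintype.card_fin] at this
      omega
    refine ⟨Function.update g a c, ?_⟩
    intro x hx y hy hxy hgxy hR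
    rcases Finset.mem_insert.mp hx with hxe | hx <;> rcases Finset.mem_insert.mp hy with hye | hy
    · exact hxy (hxe.trans hye.symm)
    · have hya : y ≠ a := fun h => ha (h ▸ hy)
      rw [hxe, Function.update_self, Function.update_of_ne hya] at hgxy
      have hR' : R a y := hxe ▸ hR
      exact hc (Finset.mem_image.mpr ⟨y, Finset.mem_filter.mpr ⟨hy, hR'⟩, hgxy.symm⟩)
    · have hxa : x ≠ a := fun h => ha (h ▸ hx)
      rw [hye, Function.update_self, Function.update_of_ne hxa] at hgxy
      have hR' : R a x := hsymm _ _ (hye ▸ hR)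
      exact hc (Finset.mem_image.mpr ⟨x, Finset.mem_filter.mpr ⟨hx, hR'⟩, hgxy⟩)
    · have hxa : x ≠ a := fun h => ha (h ▸ hx)
      have hya : y ≠ a := fun h => ha (h ▸ hy)
      rw [Function.update_of_ne hxa, Function.update_of_ne hya] at hgxy
      exact hg x hx y hy hxy hgxy hR

theorem mem_cornerCube_self {D : ℕ} (a : Fin D → ℝ) {γ : ℝ} (hγ : 0 ≤ γ) :
    a ∈ cornerCube a γ := by
  intro ℓ _
  exact ⟨le_refl _, by linarith⟩

theorem setDist_bddBelow {D : ℕ} (A B : Set (Fin D → ℝ)) :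
    BddBelow {r : ℝ | ∃ x ∈ A, ∃ y ∈ B, r = ‖x - y‖} := by
  refine ⟨0, ?_⟩
  rintro r ⟨x, hx, y, hy, rfl⟩
  exact norm_nonneg _

theorem setDist_comm' {D : ℕ} (A B : Set (Fin D → ℝ)) : setDist A B = setDist B A := by
  unfold setDist
  congr 1
  ext r
  constructor
  · rintro ⟨x, hx, y, hy, rfl⟩
    exact ⟨y, hy, x, hx, by rw [norm_sub_rev]⟩
  · rintro ⟨x, hx, y, hy, rfl⟩
    exact ⟨y, hy, x, hx, by rw [norm_sub_rev]⟩

theorem setDist_self_lt {D : ℕ} (a : Fin D → ℝ) {γ : ℝ} (hγ : 0 < γ) :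
    setDist (cornerCube a γ) (cornerCube a γ) < γ := by
  have h0 : (0 : ℝ) ∈ {r : ℝ | ∃ x ∈ cornerCube a γ, ∃ y ∈ cornerCube a γ, r = ‖x - y‖} :=
    ⟨a, mem_cornerCube_self a hγ.le, a, mem_cornerCube_self a hγ.le, by simp⟩
  have := csInf_le (setDist_bddBelow _ _) h0
  calc setDist (cornerCube a γ) (cornerCube a γ) ≤ 0 := this
    _ < γ := hγ

theorem close_of_setDist_lt {D : ℕ} {a c : Fin D → ℝ} {γ : ℝ} (hγ : 0 < γ)
    (h : setDist (cornerCube a γ) (cornerCube c γ) < γ) :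
    ∀ ℓ, |c ℓ - a ℓ| < 2 * γ := by
  have hne : {r : ℝ | ∃ x ∈ cornerCube a γ, ∃ y ∈ cornerCube c γ, r = ‖x - y‖}.Nonempty :=
    ⟨‖a - c‖, a, mem_cornerCube_self a hγ.le, c, mem_cornerCube_self c hγ.le, rfl⟩
  obtain ⟨r, ⟨x, hx, y, hy, rfl⟩, hrγ⟩ := exists_lt_of_csInf_lt hne h
  intro ℓ
  have h1 : |x ℓ - y ℓ| ≤ ‖x - y‖ := by
    have h2 := norm_le_pi_norm (x - y) ℓ
    simpa [Real.norm_eq_abs] using h2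
  have h3 : |x ℓ - y ℓ| < γ := lt_of_le_of_lt h1 hrγ
  have hx1 := hx ℓ (Set.mem_univ ℓ)
  have hy1 := hy ℓ (Set.mem_univ ℓ)
  simp only [Set.mem_Icc] at hx1 hy1
  rw [abs_lt] at h3 ⊢
  constructor <;> [linarith [hx1.2, hy1.1]; linarith [hx1.1, hy1.2]]

theorem fiveGrid {γ t : ℝ} (hγ : 0 < γ) (h0 : 0 ≤ t) (h5 : t ≤ 5 * γ) :
    ∃ k : Fin 5, (k : ℝ) * γ ≤ t ∧ t ≤ ((k : ℝ) + 1) * γ := by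
  by_cases h1 : t ≤ 1 * γ
  · exact ⟨⟨0, by omega⟩, by simp only [Fin.val_mk]; push_cast; linarith,
      by simp only [Fin.val_mk]; push_cast; linarith⟩
  by_cases h2 : t ≤ 2 * γ
  · exact ⟨⟨1, by omega⟩, by simp only [Fin.val_mk]; push_cast; linarith,
      by simp only [Fin.val_mk]; push_cast; linarith⟩
  by_cases h3 : t ≤ 3 * γ
  · exact ⟨⟨2, by omega⟩, by simp only [Fin.val_mk]; push_cast; linarith,
      by simp only [Fin.val_mk]; push_cast; linarith⟩
  by_cases h4 : t ≤ 4 * γ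
  · exact ⟨⟨3, by omega⟩, by simp only [Fin.val_mk]; push_cast; linarith,
      by simp only [Fin.val_mk]; push_cast; linarith⟩
  · exact ⟨⟨4, by omega⟩, by simp only [Fin.val_mk]; push_cast; linarith,
      by simp only [Fin.val_mk]; push_cast; linarith⟩

theorem cube_subset_grid {D : ℕ} {a c : Fin D → ℝ} {γ : ℝ} (hγ : 0 < γ)
    (h : ∀ ℓ, |c ℓ - a ℓ| < 2 * γ) :
    cornerCube c γ ⊆ ⋃ v ∈ (Finset.univ.image
      (fun v : Fin D → Fin 5 => fun ℓ => a ℓ + ((v ℓ : ℝ) - 2) * γ)), cornerCube v γ := by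
  intro z hz
  have hz' : ∀ ℓ, c ℓ ≤ z ℓ ∧ z ℓ ≤ c ℓ + γ := by
    intro ℓ
    have := hz ℓ (Set.mem_univ ℓ)
    simpa using this
  have hk : ∀ ℓ, ∃ k : Fin 5, (k : ℝ) * γ ≤ z ℓ - (a ℓ - 2 * γ) ∧
      z ℓ - (a ℓ - 2 * γ) ≤ ((k : ℝ) + 1) * γ := by
    intro ℓ
    have hab := abs_lt.mp (h ℓ)
    exact fiveGrid hγ (by linarith [(hz' ℓ).1]) (by linarith [(hz' ℓ).2])
  choose k hk1 hk2 using hk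
  refine Set.mem_iUnion₂.mpr ⟨fun ℓ => a ℓ + ((k ℓ : ℝ) - 2) * γ, ?_, ?_⟩
  · exact Finset.mem_image.mpr ⟨k, Finset.mem_univ _, rfl⟩
  · intro ℓ _
    exact ⟨by dsimp only; linarith [hk1 ℓ], by dsimp only; linarith [hk2 ℓ]⟩

end AuxCovering

/-- Partition of a minimum covering into `5^D` separated subfamilies. -/
theorem covering_division
    (D : ℕ) (S : Set (Fin D → ℝ)) (hS : IsCompact S) (hS' : S ⊆ unitCube D)
    (γ : ℝ) (hγ : 0 < γ) (I : Finset (Fin D → ℝ))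
    (hcov : S ⊆ ⋃ a ∈ I, cornerCube a γ)
    (hmin : ∀ J : Finset (Fin D → ℝ), S ⊆ (⋃ a ∈ J, cornerCube a γ) → I.card ≤ J.card) :
    ∃ g : (Fin D → ℝ) → Fin (5 ^ D),
      ∀ a ∈ I, ∀ b ∈ I, a ≠ b → g a = g b → γ ≤ setDist (cornerCube a γ) (cornerCube b γ) := by
  classical
  have h5 : 0 < 5 ^ D := pow_pos (by norm_num) D
  set R : (Fin D → ℝ) → (Fin D → ℝ) → Prop :=
    fun a b => setDist (cornerCube a γ) (cornerCube b γ) < γ with hR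
  haveI : DecidableRel R := fun a b => Classical.dec _
  have hsymm : ∀ a b, R a b → R b a := by
    intro a b h
    rw [hR]
    simp only
    rw [setDist_comm']
    exact h
  have hdeg : ∀ a ∈ I, (I.filter (fun b => R a b)).card ≤ 5 ^ D := by
    intro a ha
    by_contra hlt
    push_neg at hlt
    set N := I.filter (fun b => R a b) with hN
    have hNsub : N ⊆ I := Finset.filter_subset _ _
    set G : Finset (Fin D → ℝ) := Finset.univ.image
      (fun v : Fin D → Fin 5 => fun ℓ => a ℓ + ((v ℓ : ℝ) - 2) * γ) with hG
    have hGcard : G.card ≤ 5 ^ D := by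
      refine le_trans Finset.card_image_le ?_
      simp [Finset.card_univ]
    have hJcov : S ⊆ ⋃ b ∈ ((I \ N) ∪ G), cornerCube b γ := by
      intro x hxS
      obtain ⟨b, hbI, hxb⟩ := Set.mem_iUnion₂.mp (hcov hxS)
      by_cases hbN : b ∈ N
      · have hRab : R a b := (Finset.mem_filter.mp hbN).2
        have hsub := cube_subset_grid hγ (close_of_setDist_lt hγ hRab) hxb
        obtain ⟨v, hvG, hxv⟩ := Set.mem_iUnion₂.mp hsub
        exact Set.mem_iUnion₂.mpr ⟨v, Finset.mem_union_right _ hvG, hxv⟩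
      · exact Set.mem_iUnion₂.mpr ⟨b, Finset.mem_union_left _
          (Finset.mem_sdiff.mpr ⟨hbI, hbN⟩), hxb⟩
    have hmin' := hmin _ hJcov
    have hNI : N.card ≤ I.card := Finset.card_le_card hNsub
    have hJcard : ((I \ N) ∪ G).card ≤ (I.card - N.card) + 5 ^ D := by
      refine le_trans (Finset.card_union_le _ _) ?_
      rw [Finset.card_sdiff_of_subset hNsub]
      omega
    omega
  obtain ⟨g, hg⟩ := greedy_coloring (5 ^ D) h5 R
    (fun a => setDist_self_lt a hγ) hsymm I hdeg
  exact ⟨g, fun a ha b hb hab hgab => not_lt.mp (hg a ha b hb hab hgab)⟩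
end

section
/- Let Φ = ((A_L,b_L),…,(A_1,b_1)) and Φ' = ((A'_L,b'_L),…,(A'_1,b'_1)) be ReLU network architectures with identical layer dimensions, all layer widths at most W, all parameter entries lying in [−B,B] with B ≥ 1, and such that every entry of A'_ℓ (resp. b'_ℓ) differs from the corresponding entry of A_ℓ (resp. b_ℓ) by at most ε. Then sup_{x ∈ [0,1]^D} |R(Φ)(x) − R(Φ')(x)| ≤ L·(W+1)^L·B^{L−1}·ε. -/
open MeasureTheory ProbabilityTheory Filter Matrix

private lemma affine_mag (n : ℕ) (W : ℝ) (hn : (n:ℝ) ≤ W) (B : ℝ) (hB : 1 ≤ B)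
    (ℓ : ℕ) (a u : Fin n → ℝ) (c : ℝ) (ha : ∀ j, |a j| ≤ B) (hc : |c| ≤ B)
    (hu : ∀ j, |u j| ≤ ((W+1)*B)^ℓ) :
    |(∑ j, a j * u j) + c| ≤ ((W+1)*B)^(ℓ+1) := by
  have hW0 : (0:ℝ) ≤ W := le_trans (Nat.cast_nonneg n) hn
  have hB0 : (0:ℝ) ≤ B := le_trans zero_le_one hB
  have hM1 : (1:ℝ) ≤ ((W+1)*B)^ℓ := one_le_pow₀ (by nlinarith)
  have h1 : |∑ j, a j * u j| ≤ (n:ℝ) * (B * ((W+1)*B)^ℓ) := by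
    calc |∑ j, a j * u j| ≤ ∑ j : Fin n, |a j * u j| := Finset.abs_sum_le_sum_abs _ _
      _ ≤ ∑ _j : Fin n, B * ((W+1)*B)^ℓ := by
          apply Finset.sum_le_sum
          intro j _
          rw [abs_mul]
          exact mul_le_mul (ha j) (hu j) (abs_nonneg _) hB0
      _ = (n:ℝ) * (B * ((W+1)*B)^ℓ) := by simp [mul_comm]
  calc |(∑ j, a j * u j) + c| ≤ |∑ j, a j * u j| + |c| := abs_add_le _ _
    _ ≤ (n:ℝ) * (B * ((W+1)*B)^ℓ) + B := add_le_add h1 hc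
    _ ≤ W * (B * ((W+1)*B)^ℓ) + B * ((W+1)*B)^ℓ :=
        add_le_add (mul_le_mul_of_nonneg_right hn (by positivity))
          (le_mul_of_one_le_right hB0 hM1)
    _ = ((W+1)*B)^(ℓ+1) := by ring

private lemma affine_step (n : ℕ) (W : ℝ) (hn : (n:ℝ) ≤ W) (B ε : ℝ) (hB : 1 ≤ B)
    (hε : 0 ≤ ε) (ℓ : ℕ) (a a' u u' : Fin n → ℝ) (c c' : ℝ)
    (ha : ∀ j, |a j| ≤ B) (haa : ∀ j, |a j - a' j| ≤ ε) (hc : |c - c'| ≤ ε)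
    (hu' : ∀ j, |u' j| ≤ ((W+1)*B)^ℓ)
    (hd : ∀ j, B * |u j - u' j| ≤ (ℓ:ℝ) * (W+1)^ℓ * B^ℓ * ε) :
    |(∑ j, a j * u j) + c - ((∑ j, a' j * u' j) + c')|
      ≤ ((ℓ:ℝ)+1) * (W+1)^(ℓ+1) * B^ℓ * ε := by
  have hW0 : (0:ℝ) ≤ W := le_trans (Nat.cast_nonneg n) hn
  have hB0 : (0:ℝ) ≤ B := le_trans zero_le_one hB
  have hW1 : (1:ℝ) ≤ (W+1)^ℓ := one_le_pow₀ (by linarith)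
  have hB1 : (1:ℝ) ≤ B^ℓ := one_le_pow₀ hB
  set K : ℝ := ((ℓ:ℝ)+1) * (W+1)^ℓ * B^ℓ * ε with hK
  have hterm : ∀ j, |a j * u j - a' j * u' j| ≤ K := by
    intro j
    have h1 : |a j * (u j - u' j)| ≤ (ℓ:ℝ) * (W+1)^ℓ * B^ℓ * ε := by
      rw [abs_mul]
      calc |a j| * |u j - u' j| ≤ B * |u j - u' j| :=
            mul_le_mul_of_nonneg_right (ha j) (abs_nonneg _)
        _ ≤ (ℓ:ℝ) * (W+1)^ℓ * B^ℓ * ε := hd j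
    have h2 : |(a j - a' j) * u' j| ≤ ε * ((W+1)^ℓ * B^ℓ) := by
      rw [abs_mul, ← mul_pow]
      exact mul_le_mul (haa j) (hu' j) (abs_nonneg _) hε
    calc |a j * u j - a' j * u' j|
        = |a j * (u j - u' j) + (a j - a' j) * u' j| := by ring_nf
      _ ≤ |a j * (u j - u' j)| + |(a j - a' j) * u' j| := abs_add_le _ _
      _ ≤ (ℓ:ℝ) * (W+1)^ℓ * B^ℓ * ε + ε * ((W+1)^ℓ * B^ℓ) := add_le_add h1 h2
      _ = K := by rw [hK]; ring
  have hK0 : 0 ≤ K := by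
    have : (0:ℝ) ≤ (ℓ:ℝ)+1 := by positivity
    rw [hK]; positivity
  have hsum : |(∑ j, a j * u j) - ∑ j, a' j * u' j| ≤ (n:ℝ) * K := by
    rw [← Finset.sum_sub_distrib]
    calc |∑ j, (a j * u j - a' j * u' j)| ≤ ∑ j : Fin n, |a j * u j - a' j * u' j| :=
          Finset.abs_sum_le_sum_abs _ _
      _ ≤ ∑ _j : Fin n, K := Finset.sum_le_sum fun j _ => hterm j
      _ = (n:ℝ) * K := by simp [mul_comm]
  have hεK : ε ≤ (W+1)^ℓ * B^ℓ * ε := le_mul_of_one_le_left hε (by nlinarith)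
  calc |(∑ j, a j * u j) + c - ((∑ j, a' j * u' j) + c')|
      ≤ |(∑ j, a j * u j) - ∑ j, a' j * u' j| + |c - c'| := by
        have : (∑ j, a j * u j) + c - ((∑ j, a' j * u' j) + c')
            = ((∑ j, a j * u j) - ∑ j, a' j * u' j) + (c - c') := by ring
        rw [this]; exact abs_add_le _ _
    _ ≤ (n:ℝ) * K + ε := add_le_add hsum hc
    _ ≤ W * K + (W+1)^ℓ * B^ℓ * ε := add_le_add (mul_le_mul_of_nonneg_right hn hK0) hεK
    _ ≤ ((ℓ:ℝ)+1) * (W+1)^(ℓ+1) * B^ℓ * ε := by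
        rw [hK, pow_succ]
        have hl0 : (0:ℝ) ≤ (ℓ:ℝ) := Nat.cast_nonneg ℓ
        have hQ : (0:ℝ) ≤ (W+1)^ℓ * B^ℓ * ε := by positivity
        nlinarith [mul_nonneg hl0 hQ]

/-- Parameter-perturbation bound for ReLU networks. -/
theorem network_perturbation_bound
    (D Lm : ℕ) (p : ℕ → ℕ) (hp0 : p 0 = D) (hpL : p (Lm + 1) = 1)
    (W : ℕ) (hW : ∀ ℓ ≤ Lm + 1, p ℓ ≤ W)
    (B ε : ℝ) (hB : 1 ≤ B) (hε : 0 ≤ ε)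
    (A A' : ∀ ℓ : ℕ, Matrix (Fin (p (ℓ + 1))) (Fin (p ℓ)) ℝ)
    (b b' : ∀ ℓ : ℕ, Fin (p (ℓ + 1)) → ℝ)
    (hA : ∀ ℓ ≤ Lm, ∀ i j, |A ℓ i j| ≤ B ∧ |A' ℓ i j| ≤ B ∧ |A ℓ i j - A' ℓ i j| ≤ ε)
    (hb : ∀ ℓ ≤ Lm, ∀ i, |b ℓ i| ≤ B ∧ |b' ℓ i| ≤ B ∧ |b ℓ i - b' ℓ i| ≤ ε) :
    ∀ x ∈ unitCube D,
      |(NeuralNet.mk Lm p A b).realize (fun i => x (Fin.cast hp0 i)) (Fin.cast hpL.symm 0) -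
        (NeuralNet.mk Lm p A' b').realize (fun i => x (Fin.cast hp0 i)) (Fin.cast hpL.symm 0)|
        ≤ ((Lm : ℝ) + 1) * ((W : ℝ) + 1) ^ (Lm + 1) * B ^ Lm * ε := by
  intro x hx
  have hB0 : (0:ℝ) ≤ B := le_trans zero_le_one hB
  set x0 : Fin (p 0) → ℝ := fun i => x (Fin.cast hp0 i) with hx0
  have hx1 : ∀ i, |x0 i| ≤ 1 := by
    intro i
    rw [unitCube, Set.mem_univ_pi] at hx
    have h := hx (Fin.cast hp0 i)
    rw [abs_le]
    exact ⟨by linarith [h.1], h.2⟩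
  have key : ∀ ℓ, ℓ ≤ Lm + 1 → ∀ i : Fin (p ℓ),
      |(NeuralNet.mk Lm p A' b').hidden ℓ x0 i| ≤ (((W:ℝ)+1)*B)^ℓ ∧
      B * |(NeuralNet.mk Lm p A b).hidden ℓ x0 i -
        (NeuralNet.mk Lm p A' b').hidden ℓ x0 i| ≤ (ℓ:ℝ) * ((W:ℝ)+1)^ℓ * B^ℓ * ε := by
    intro ℓ
    induction ℓ with
    | zero =>
      intro _ i
      constructor
      · simpa [NeuralNet.hidden] using hx1 i
      · simp [NeuralNet.hidden]
    | succ ℓ ih =>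
      intro hℓ i
      have hℓ' : ℓ ≤ Lm + 1 := Nat.le_of_succ_le hℓ
      have hℓLm : ℓ ≤ Lm := Nat.lt_succ_iff.mp hℓ
      have hpW : ((p ℓ : ℝ)) ≤ (W:ℝ) := by exact_mod_cast hW ℓ (le_trans hℓLm (Nat.le_succ _))
      set u : Fin (p ℓ) → ℝ := (NeuralNet.mk Lm p A b).hidden ℓ x0 with hu
      set u' : Fin (p ℓ) → ℝ := (NeuralNet.mk Lm p A' b').hidden ℓ x0 with hu'
      have hrw : (NeuralNet.mk Lm p A b).hidden (ℓ+1) x0 i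
          = max ((∑ j, A ℓ i j * u j) + b ℓ i) 0 := by
        simp [NeuralNet.hidden, Matrix.mulVec, dotProduct, ← hu]
      have hrw' : (NeuralNet.mk Lm p A' b').hidden (ℓ+1) x0 i
          = max ((∑ j, A' ℓ i j * u' j) + b' ℓ i) 0 := by
        simp [NeuralNet.hidden, Matrix.mulVec, dotProduct, ← hu']
      constructor
      · rw [hrw']
        have h1 : |max ((∑ j, A' ℓ i j * u' j) + b' ℓ i) 0|
            ≤ |(∑ j, A' ℓ i j * u' j) + b' ℓ i| := by
          rw [abs_of_nonneg (le_max_right _ _)]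
          exact max_le (le_abs_self _) (abs_nonneg _)
        refine le_trans h1 ?_
        exact affine_mag (p ℓ) W hpW B hB ℓ (fun j => A' ℓ i j) u' (b' ℓ i)
          (fun j => (hA ℓ hℓLm i j).2.1) (hb ℓ hℓLm i).2.1 (fun j => (ih hℓ' j).1)
      · rw [hrw, hrw']
        have h1 : |max ((∑ j, A ℓ i j * u j) + b ℓ i) 0 -
              max ((∑ j, A' ℓ i j * u' j) + b' ℓ i) 0|
            ≤ |(∑ j, A ℓ i j * u j) + b ℓ i - ((∑ j, A' ℓ i j * u' j) + b' ℓ i)| :=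
          abs_max_sub_max_le_abs _ _ _
        have h2 := affine_step (p ℓ) W hpW B ε hB hε ℓ
          (fun j => A ℓ i j) (fun j => A' ℓ i j) u u' (b ℓ i) (b' ℓ i)
          (fun j => (hA ℓ hℓLm i j).1) (fun j => (hA ℓ hℓLm i j).2.2)
          (hb ℓ hℓLm i).2.2 (fun j => (ih hℓ' j).1) (fun j => (ih hℓ' j).2)
        calc B * |max ((∑ j, A ℓ i j * u j) + b ℓ i) 0 -
              max ((∑ j, A' ℓ i j * u' j) + b' ℓ i) 0|
            ≤ B * (((ℓ:ℝ)+1) * ((W:ℝ)+1)^(ℓ+1) * B^ℓ * ε) :=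
              mul_le_mul_of_nonneg_left (le_trans h1 h2) hB0
          _ = ((ℓ+1 : ℕ) : ℝ) * ((W:ℝ)+1)^(ℓ+1) * B^(ℓ+1) * ε := by push_cast; ring
  have hkLm := key Lm (Nat.le_succ Lm)
  set u : Fin (p Lm) → ℝ := (NeuralNet.mk Lm p A b).hidden Lm x0 with hu
  set u' : Fin (p Lm) → ℝ := (NeuralNet.mk Lm p A' b').hidden Lm x0 with hu'
  set i : Fin (p (Lm+1)) := Fin.cast hpL.symm 0 with hi
  have hpW : ((p Lm : ℝ)) ≤ (W:ℝ) := by exact_mod_cast hW Lm (Nat.le_succ Lm)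
  have hrw : (NeuralNet.mk Lm p A b).realize x0 i = (∑ j, A Lm i j * u j) + b Lm i := by
    simp [NeuralNet.realize, Matrix.mulVec, dotProduct, ← hu]
  have hrw' : (NeuralNet.mk Lm p A' b').realize x0 i = (∑ j, A' Lm i j * u' j) + b' Lm i := by
    simp [NeuralNet.realize, Matrix.mulVec, dotProduct, ← hu']
  rw [hrw, hrw']
  exact affine_step (p Lm) W hpW B ε hB hε Lm
    (fun j => A Lm i j) (fun j => A' Lm i j) u u' (b Lm i) (b' Lm i)
    (fun j => (hA Lm le_rfl i j).1) (fun j => (hA Lm le_rfl i j).2.2)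
    (hb Lm le_rfl i).2.2 (fun j => (hkLm j).1) (fun j => (hkLm j).2)
end

section
/- For every s ∈ ℕ with s ≥ 2, there exists a ReLU network Φ^{max,s} with s-dimensional input and 1-dimensional output such that R(Φ^{max,s})(x₁,…,x_s) = max{x₁,…,x_s} for all (x₁,…,x_s) ∈ ℝ_{≥0}^s, and moreover W(Φ^{max,s}) ≤ 42·s, L(Φ^{max,s}) < 2·log₂ s + 3, and B(Φ^{max,s}) = 1. -/
open MeasureTheory ProbabilityTheory Filter Matrix

/-!
The network runs a knock-out tournament of depth `K = ⌈log₂ s⌉` on the input padded by zeros to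
length `2^K`: each round replaces neighbours `a, b` by `max a b`. A ReLU layer cannot output
`max a b` itself, but for `b ≥ 0` it can carry the pair `(max (a - b) 0, b)`, whose sum is
`max a b`; the linear part of the next layer adds up these pairs and forms the next differences.
All weights lie in `{0, 1, -1}`, every column has at most two nonzero entries and the widths halve
from layer to layer, so the number of parameters is at most `2s + 4 · 2^K < 10s`.
-/

open Finset

theorem max_sub_zero_add {α : Type*} [AddCommGroup α] [LinearOrder α] [IsOrderedAddMonoid α]
    (a b : α) : max (a - b) 0 + b = max a b := by
  rw [← sub_self b, max_sub_sub_right, sub_add_cancel]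

theorem Finset.sum_range_two_mul {M : Type*} [AddCommMonoid M] (f : ℕ → M) (n : ℕ) :
    ∑ c ∈ range (2 * n), f c = ∑ i ∈ range n, (f (2 * i) + f (2 * i + 1)) := by
  induction n with
  | zero => simp
  | succ n ih =>
    rw [mul_add, mul_one, sum_range_succ, sum_range_succ, sum_range_succ, ih, add_assoc]

theorem sum_range_two_pow_sub_lt (K : ℕ) : ∑ ℓ ∈ range K, 2 ^ (K - ℓ) < 2 ^ (K + 1) := by
  induction K with
  | zero => simp
  | succ K ih =>
    rw [sum_range_succ']
    simp only [Nat.add_sub_add_right, Nat.sub_zero, pow_succ 2 (K + 1)]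
    omega

theorem Matrix.ncard_ne_zero_le_two_mul {m : ℕ} {ι R : Type*} [Fintype ι] [Zero R]
    (A : Matrix (Fin m) ι R) (g h : ι → ℕ)
    (hA : ∀ r c, A r c ≠ 0 → (r : ℕ) = g c ∨ (r : ℕ) = h c) :
    {rc : Fin m × ι | A rc.1 rc.2 ≠ 0}.ncard ≤ 2 * Fintype.card ι := by
  have hinj : Set.InjOn (fun rc : Fin m × ι => (rc.2, decide ((rc.1 : ℕ) = g rc.2)))
      {rc | A rc.1 rc.2 ≠ 0} := by
    rintro ⟨r, c⟩ hrc ⟨r', c'⟩ hrc' heq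
    simp only [Prod.mk.injEq, decide_eq_decide] at heq
    obtain ⟨rfl, hg⟩ := heq
    have := hA r c hrc
    have := hA r' c hrc'
    simp only [Prod.mk.injEq, and_true]
    ext
    omega
  calc {rc : Fin m × ι | A rc.1 rc.2 ≠ 0}.ncard
      ≤ (Set.univ : Set (ι × Bool)).ncard :=
        Set.ncard_le_ncard_of_injOn _ (fun _ _ => Set.mem_univ _) hinj
    _ = 2 * Fintype.card ι := by simp [Set.ncard_univ, mul_comm]

namespace NeuralNet

theorem maxParam_eq {Φ : NeuralNet} {B : ℝ}
    (hA : ∀ ℓ ≤ Φ.Lm, ∀ i j, |Φ.A ℓ i j| ≤ B) (hb : ∀ ℓ ≤ Φ.Lm, ∀ i, |Φ.b ℓ i| ≤ B)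
    (hB : ∃ ℓ ≤ Φ.Lm, ∃ i j, |Φ.A ℓ i j| = B) : Φ.maxParam = B := by
  obtain ⟨ℓ, hℓ, i, j, hij⟩ := hB
  refine IsGreatest.csSup_eq ⟨⟨ℓ, hℓ, .inl ⟨i, j, hij.symm⟩⟩, ?_⟩
  rintro r ⟨ℓ, hℓ, ⟨i, j, rfl⟩ | ⟨i, rfl⟩⟩
  exacts [hA ℓ hℓ i j, hb ℓ hℓ i]

theorem numParams_le_of_bias_eq_zero {Φ : NeuralNet} {f : ℕ → ℕ}
    (hA : ∀ ℓ ≤ Φ.Lm, {ij : Fin (Φ.p (ℓ + 1)) × Fin (Φ.p ℓ) | Φ.A ℓ ij.1 ij.2 ≠ 0}.ncard ≤ f ℓ)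
    (hb : ∀ ℓ i, Φ.b ℓ i = 0) : Φ.numParams ≤ ∑ ℓ ∈ range (Φ.Lm + 1), f ℓ := by
  refine sum_le_sum fun ℓ hℓ => ?_
  simpa [hb] using hA ℓ (Nat.lt_succ_iff.mp (mem_range.mp hℓ))

end NeuralNet

def pairDiff (v : ℕ → ℝ) (r : ℕ) : ℝ := if Even r then v r - v (r + 1) else v r

def pairDiffCoeff (r c : ℕ) : ℝ := if c = r then 1 else if Even r ∧ c = r + 1 then -1 else 0

theorem pairDiffCoeff_ne_zero {r c : ℕ} (h : pairDiffCoeff r c ≠ 0) : r = c ∨ r = c - 1 := by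
  unfold pairDiffCoeff at h
  split_ifs at h with h1 h2
  · exact .inl h1.symm
  · exact .inr (by omega)
  · exact absurd rfl h

theorem abs_pairDiffCoeff_le (r c : ℕ) : |pairDiffCoeff r c| ≤ 1 := by
  unfold pairDiffCoeff
  split_ifs <;> norm_num

theorem sum_pairDiffCoeff_mul {n : ℕ} {G : ℕ → ℝ} (hG : ∀ c, n ≤ c → G c = 0) (r : ℕ) :
    ∑ c ∈ range n, pairDiffCoeff r c * G c = pairDiff G r := by
  rw [sum_eq_add r (r + 1) (by omega)]
  · by_cases hr : Even r <;> simp [pairDiffCoeff, pairDiff, hr, sub_eq_add_neg]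
  · rintro c - ⟨hcr, hcr'⟩
    simp [pairDiffCoeff, hcr, hcr']
  · exact fun hr => by rw [hG r (by simpa using hr), mul_zero]
  · exact fun hr => by rw [hG (r + 1) (by simpa using hr), mul_zero]

theorem sum_pairDiffCoeff_div_two_mul {n : ℕ} {G : ℕ → ℝ} (hG : ∀ c, n ≤ c → G c = 0) (r : ℕ) :
    ∑ c ∈ range n, pairDiffCoeff r (c / 2) * G c =
      pairDiff (fun i => G (2 * i) + G (2 * i + 1)) r := by
  have hsub : ∑ c ∈ range n, pairDiffCoeff r (c / 2) * G c =
      ∑ c ∈ range (2 * n), pairDiffCoeff r (c / 2) * G c :=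
    sum_subset (range_subset_range.2 (by omega)) fun c _ hc => by
      rw [hG c (by simpa using hc), mul_zero]
  rw [hsub, sum_range_two_mul, ← sum_pairDiffCoeff_mul (n := n) (fun i hi => by
    rw [hG _ (by omega), hG _ (by omega), add_zero])]
  refine sum_congr rfl fun i _ => ?_
  rw [show 2 * i / 2 = i by omega, show (2 * i + 1) / 2 = i by omega, mul_add]

theorem relu_pairDiff_add_relu_pairDiff {v : ℕ → ℝ} (i : ℕ) (hv : 0 ≤ v (2 * i + 1)) :
    max (pairDiff v (2 * i)) 0 + max (pairDiff v (2 * i + 1)) 0 =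
      max (v (2 * i)) (v (2 * i + 1)) := by
  rw [pairDiff, if_pos (even_two_mul i), pairDiff, if_neg (Nat.not_even_two_mul_add_one i),
    max_eq_left hv, max_sub_zero_add]

section Tournament

variable {s : ℕ} (x : Fin s → ℝ)

def padZero (n : ℕ) : ℝ := if h : n < s then x ⟨n, h⟩ else 0

def blockMax : ℕ → ℕ → ℝ
  | 0, n => padZero x n
  | k + 1, i => max (blockMax k (2 * i)) (blockMax k (2 * i + 1))

variable {x}

theorem padZero_coe (i : Fin s) : padZero x i = x i := dif_pos i.isLt

theorem padZero_eq_zero {n : ℕ} (hn : s ≤ n) : padZero x n = 0 := dif_neg (by omega)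

theorem blockMax_nonneg (hx : 0 ≤ x) : ∀ k i, 0 ≤ blockMax x k i
  | 0, n => by
    unfold blockMax padZero
    split_ifs
    exacts [hx _, le_rfl]
  | k + 1, i => (blockMax_nonneg hx k (2 * i)).trans (le_max_left _ _)

theorem blockMax_eq_zero : ∀ {k i : ℕ}, s ≤ 2 ^ k * i → blockMax x k i = 0
  | 0, n, h => padZero_eq_zero (by simpa using h)
  | k + 1, i, h => by
    have h' : s ≤ 2 ^ k * (2 * i) := by rwa [pow_succ, mul_assoc] at h
    have h'' : s ≤ 2 ^ k * (2 * i + 1) := h'.trans (Nat.mul_le_mul_left _ (by omega))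
    rw [blockMax, blockMax_eq_zero h', blockMax_eq_zero h'', max_self]

theorem padZero_le_blockMax (n : ℕ) : ∀ k, padZero x n ≤ blockMax x k (n / 2 ^ k)
  | 0 => by simp [blockMax]
  | k + 1 => by
    have h := padZero_le_blockMax n k
    rw [blockMax, pow_succ, ← Nat.div_div_eq_div_mul]
    rcases Nat.mod_two_eq_zero_or_one (n / 2 ^ k) with h2 | h2
    · exact le_max_of_le_left (h.trans_eq (by congr 1; omega))
    · exact le_max_of_le_right (h.trans_eq (by congr 1; omega))

theorem blockMax_le {c : ℝ} (h : ∀ n, padZero x n ≤ c) : ∀ k i, blockMax x k i ≤ c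
  | 0, n => h n
  | k + 1, _ => max_le (blockMax_le h k _) (blockMax_le h k _)

theorem blockMax_eq_iSup [Nonempty (Fin s)] (hx : 0 ≤ x) {K : ℕ} (hK : s ≤ 2 ^ K) :
    blockMax x K 0 = ⨆ i, x i := by
  have hbdd := (Set.finite_range x).bddAbove
  apply le_antisymm
  · refine blockMax_le (fun n => ?_) K 0
    unfold padZero
    split_ifs
    · exact le_ciSup hbdd _
    · exact (hx (Classical.arbitrary _)).trans (le_ciSup hbdd _)
  · refine ciSup_le fun i => ?_
    have := padZero_le_blockMax (x := x) i K
    rwa [padZero_coe, Nat.div_eq_of_lt (i.isLt.trans_le hK)] at this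

end Tournament

/-- Layer `0` takes neighbour differences of the input; a layer `ℓ ≥ 1` first adds up the
pairs carried by its input, hence the column index `c / 2`. -/
def maxNet (s K : ℕ) : NeuralNet where
  Lm := K
  p ℓ := if ℓ = 0 then s else 2 ^ (K + 1 - ℓ)
  A ℓ r c := if ℓ = 0 then pairDiffCoeff r c else pairDiffCoeff r (c / 2)
  b _ _ := 0

namespace maxNet

variable {s K : ℕ}

theorem p_zero : (maxNet s K).p 0 = s := rfl

theorem p_succ (ℓ : ℕ) : (maxNet s K).p (ℓ + 1) = 2 ^ (K - ℓ) := by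
  simp [maxNet]

theorem p_last : (maxNet s K).p (K + 1) = 1 := by
  rw [p_succ, Nat.sub_self, pow_zero]

theorem hidden_succ (x : Fin s → ℝ) (k : ℕ) (j : Fin ((maxNet s K).p (k + 1))) :
    (maxNet s K).hidden (k + 1) x j = max (((maxNet s K).A k *ᵥ (maxNet s K).hidden k x) j) 0 :=
  congrArg (max · 0) (add_zero _)

theorem mulVec_hidden (hsK : s ≤ 2 ^ K) {x : Fin s → ℝ} (hx : 0 ≤ x) :
    ∀ k ≤ K, ∀ j, ((maxNet s K).A k *ᵥ (maxNet s K).hidden k x) j = pairDiff (blockMax x k) j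
  | 0, _, j => by
    calc ∑ c : Fin s, pairDiffCoeff j c * x c
        = ∑ c : Fin s, pairDiffCoeff j c * padZero x c := by simp only [padZero_coe]
      _ = ∑ c ∈ range s, pairDiffCoeff j c * padZero x c :=
          Fin.sum_univ_eq_sum_range (fun c => pairDiffCoeff j c * padZero x c) s
      _ = pairDiff (blockMax x 0) j := sum_pairDiffCoeff_mul (fun _ => padZero_eq_zero) j
  | k + 1, hk, j => by
    set G : ℕ → ℝ := fun c => max (pairDiff (blockMax x k) c) 0
    have hG : ∀ c, (maxNet s K).p (k + 1) ≤ c → G c = 0 := by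
      intro c hc
      rw [p_succ] at hc
      have hs : ∀ d, c ≤ d → s ≤ 2 ^ k * d := fun d hd => calc
        s ≤ 2 ^ K := hsK
        _ = 2 ^ k * 2 ^ (K - k) := by rw [← pow_add, Nat.add_sub_cancel' (by omega)]
        _ ≤ 2 ^ k * d := Nat.mul_le_mul_left _ (hc.trans hd)
      simp only [G, pairDiff, blockMax_eq_zero (hs c le_rfl),
        blockMax_eq_zero (hs (c + 1) (by omega)), sub_self, ite_self, max_self]
    have hpair : ∀ i, G (2 * i) + G (2 * i + 1) = blockMax x (k + 1) i := fun i =>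
      relu_pairDiff_add_relu_pairDiff i (blockMax_nonneg hx k _)
    calc ∑ c : Fin ((maxNet s K).p (k + 1)),
          pairDiffCoeff j (c / 2) * (maxNet s K).hidden (k + 1) x c
        = ∑ c : Fin ((maxNet s K).p (k + 1)), pairDiffCoeff j (c / 2) * G c := by
          simp only [hidden_succ, mulVec_hidden hsK hx k (by omega), G]
      _ = ∑ c ∈ range ((maxNet s K).p (k + 1)), pairDiffCoeff j (c / 2) * G c :=
          Fin.sum_univ_eq_sum_range (fun c => pairDiffCoeff j (c / 2) * G c) _
      _ = pairDiff (blockMax x (k + 1)) j := by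
          rw [sum_pairDiffCoeff_div_two_mul hG]
          simp only [hpair]

theorem realize_eq (hsK : s ≤ 2 ^ K) {x : Fin s → ℝ} (hx : 0 ≤ x)
    (j : Fin ((maxNet s K).p (K + 1))) : (maxNet s K).realize x j = blockMax x K 0 := by
  have hj : (j : ℕ) = 0 := by
    have := j.isLt
    have := p_last (s := s) (K := K)
    omega
  calc (maxNet s K).realize x j = ((maxNet s K).A K *ᵥ (maxNet s K).hidden K x) j := add_zero _
    _ = blockMax x K 0 - blockMax x K 1 := by
      rw [mulVec_hidden hsK hx K le_rfl, hj, pairDiff, if_pos Even.zero]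
    _ = blockMax x K 0 := by rw [blockMax_eq_zero (i := 1) (by rwa [mul_one]), sub_zero]

theorem numParams_le (s K : ℕ) : (maxNet s K).numParams ≤ 2 * s + 4 * 2 ^ K := by
  have hcol : ∀ ℓ, {ij : Fin ((maxNet s K).p (ℓ + 1)) × Fin ((maxNet s K).p ℓ) |
      (maxNet s K).A ℓ ij.1 ij.2 ≠ 0}.ncard ≤ 2 * (maxNet s K).p ℓ := by
    rintro (_ | ℓ)
    · simpa using Matrix.ncard_ne_zero_le_two_mul ((maxNet s K).A 0) (fun c => c)
        (fun c => c - 1) fun r c h => pairDiffCoeff_ne_zero h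
    · simpa using Matrix.ncard_ne_zero_le_two_mul ((maxNet s K).A (ℓ + 1)) (fun c => c / 2)
        (fun c => c / 2 - 1) fun r c h => pairDiffCoeff_ne_zero h
  calc (maxNet s K).numParams ≤ ∑ ℓ ∈ range (K + 1), 2 * (maxNet s K).p ℓ :=
        NeuralNet.numParams_le_of_bias_eq_zero (fun ℓ _ => hcol ℓ) fun _ _ => rfl
    _ = 2 * s + 2 * ∑ ℓ ∈ range K, 2 ^ (K - ℓ) := by
        rw [sum_range_succ', add_comm]
        simp only [p_succ, p_zero, ← mul_sum]
    _ ≤ 2 * s + 4 * 2 ^ K := by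
        have := sum_range_two_pow_sub_lt K
        rw [pow_succ] at this
        omega

theorem maxParam_eq_one (hs : 0 < s) : (maxNet s K).maxParam = 1 := by
  refine NeuralNet.maxParam_eq (fun ℓ _ r c => ?_) (fun _ _ _ => by simp [maxNet]) ?_
  · dsimp only [maxNet]
    split_ifs <;> exact abs_pairDiffCoeff_le _ _
  · refine ⟨0, Nat.zero_le _, ⟨0, by simp [maxNet]⟩, ⟨0, hs⟩, ?_⟩
    simp [maxNet, pairDiffCoeff]

end maxNet

theorem Nat.pow_clog_lt_mul {b n : ℕ} (hb : 1 < b) (hn : 1 < n) : b ^ Nat.clog b n < b * n := by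
  have hpow : b ^ Nat.clog b n = b ^ (Nat.clog b n).pred * b := by
    rw [← pow_succ, Nat.add_one, Nat.succ_pred_eq_of_pos (Nat.clog_pos hb hn)]
  rw [hpow, mul_comm]
  exact Nat.mul_lt_mul_of_pos_left (Nat.pow_pred_clog_lt_self hb hn) (by omega)

theorem Nat.clog_le_log_add_one (b n : ℕ) : Nat.clog b n ≤ Nat.log b n + 1 := by
  rcases le_or_gt b 1 with hb | hb
  · simp [Nat.clog_of_left_le_one hb]
  rcases le_or_gt n 1 with hn | hn
  · simp [Nat.clog_of_right_le_one hn]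
  have := Nat.le_log_of_pow_le hb (Nat.pow_pred_clog_lt_self hb hn).le
  rw [Nat.pred_eq_sub_one] at this
  omega

theorem clog_add_one_lt_two_mul_logb_add_three (s : ℕ) :
    (Nat.clog 2 s + 1 : ℝ) < 2 * Real.logb 2 s + 3 := by
  have hclog : (Nat.clog 2 s : ℝ) ≤ Nat.log 2 s + 1 := by
    exact_mod_cast Nat.clog_le_log_add_one 2 s
  have hlog : (Nat.log 2 s : ℝ) ≤ Real.logb 2 s := by exact_mod_cast Real.natLog_le_logb s 2
  have hnonneg : (0 : ℝ) ≤ Nat.log 2 s := Nat.cast_nonneg _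
  linarith

/-- A ReLU max network for nonnegative inputs. -/
theorem max_network_exists
    (s : ℕ) (hs : 2 ≤ s) :
    ∃ (Φ : NeuralNet) (h0 : Φ.p 0 = s) (h1 : Φ.p (Φ.Lm + 1) = 1),
      Φ.numParams ≤ 42 * s ∧
      (Φ.depth : ℝ) < 2 * Real.logb 2 (s : ℝ) + 3 ∧
      Φ.maxParam = 1 ∧
      ∀ x : Fin s → ℝ, (∀ i, 0 ≤ x i) →
        Φ.realize (fun i => x (Fin.cast h0 i)) (Fin.cast h1.symm 0) = ⨆ i, x i := by
  have hsK : s ≤ 2 ^ Nat.clog 2 s := Nat.le_pow_clog one_lt_two s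
  refine ⟨maxNet s (Nat.clog 2 s), maxNet.p_zero, maxNet.p_last,
    ?_, ?_, maxNet.maxParam_eq_one (by omega), fun x hx => ?_⟩
  · have := maxNet.numParams_le s (Nat.clog 2 s)
    have := Nat.pow_clog_lt_mul one_lt_two hs
    omega
  · exact_mod_cast clog_add_one_lt_two_mul_logb_add_three s
  · have : Nonempty (Fin s) := ⟨⟨0, by omega⟩⟩
    exact (maxNet.realize_eq hsK hx _).trans (blockMax_eq_iSup hx hsK)
end

section
/- Fix M > 0, γ > 0, and a hypercube I = ∏_{ℓ=1}^D [ι_ℓ − γ/2, ι_ℓ + γ/2] ⊂ [0,1]^D with center (ι₁,…,ι_D). Then there exists a ReLU network Φ with input (x,y) ∈ [0,1]^D × ℝ_{≥0} and scalar output such that: (1) for every y ∈ [0, 2M+2], R(Φ)(x,y) = y for all x ∈ I; (2) for every y ∈ [0, 2M+2], 0 ≤ R(Φ)(x,y) ≤ y for all x ∈ I ⊕ γ/2, where I ⊕ r := ⋃_{z∈I} B^∞(z,r) and B^∞(z,r) is the open ℓ^∞-ball; (3) R(Φ)(x,y) = 0 for all x ∉ I ⊕ γ/2 and all y ≥ 0;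 and (4) W(Φ) = 24D + 6, L(Φ) = 3, and B(Φ) ≤ max{1, 2M+2, 1/(2M+2), D, 1+γ, 2/γ}. -/
open MeasureTheory ProbabilityTheory Filter Matrix

noncomputable section CutAux

variable (D : ℕ) (M γ : ℝ) (ι : Fin D → ℝ)

def cutβ (ℓ : Fin D) : ℝ := if ι ℓ = γ / 2 then -1 else (2 / γ) * ι ℓ - 1

def cutσ (k : ℕ) : ℕ := if k < D then k else if k < 2 * D then k - D else D

lemma cutσ_lt (k : ℕ) : cutσ D k < D + 1 := by
  unfold cutσ
  split
  · omega
  · split <;> omega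

def cutWt (k : ℕ) : ℝ :=
  if k < D then 2 / γ else if k < 2 * D then -(2 / γ) else if k < 2 * D + 2 then 1 else 0

def cutB0 (k : ℕ) : ℝ :=
  if h : k < D then -((2 / γ) * ι ⟨k, h⟩ + 1)
  else if h2 : k < 2 * D then cutβ D γ ι ⟨k - D, by omega⟩
  else if k = 2 * D then 0
  else if k = 2 * D + 1 then -(2 * M + 2)
  else 1

def cutU (k : ℕ) : ℝ :=
  if k < 2 * D then -1
  else if k = 2 * D then 1 / (2 * M + 2)
  else if k = 2 * D + 1 then -(1 / (2 * M + 2))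
  else 0

def cutP : ℕ → ℕ
  | 0 => D + 1
  | 1 => 20 * D + 2
  | _ => 1

def cutNet : NeuralNet where
  Lm := 2
  p := cutP D
  A := fun ℓ => match ℓ with
    | 0 => fun i j => if (j : ℕ) = cutσ D (i : ℕ) then cutWt D γ (i : ℕ) else 0
    | 1 => fun _ j => cutU D M (j : ℕ)
    | _ + 2 => fun _ _ => 2 * M + 2
  b := fun ℓ => match ℓ with
    | 0 => fun i => cutB0 D M γ ι (i : ℕ)
    | 1 => fun _ => 0
    | _ + 2 => fun _ => 0

def cutDP (x : Fin D → ℝ) (ℓ : Fin D) : ℝ := max ((2 / γ) * x ℓ - ((2 / γ) * ι ℓ + 1)) 0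

def cutDM (x : Fin D → ℝ) (ℓ : Fin D) : ℝ := max (-((2 / γ) * x ℓ) + cutβ D γ ι ℓ) 0

lemma cut_snoc (x : Fin D → ℝ) (y : ℝ) (k : ℕ) (h : k < D + 1) :
    (Fin.snoc x y : Fin (D + 1) → ℝ) ⟨k, h⟩ = if hk : k < D then x ⟨k, hk⟩ else y := by
  by_cases hk : k < D
  · rw [dif_pos hk]
    have h2 : (⟨k, h⟩ : Fin (D + 1)) = Fin.castSucc ⟨k, hk⟩ := rfl
    rw [h2, Fin.snoc_castSucc]
  · rw [dif_neg hk]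
    have hkD : k = D := by omega
    have h2 : (⟨k, h⟩ : Fin (D + 1)) = Fin.last D := Fin.ext (by simpa using hkD)
    rw [h2, Fin.snoc_last]

lemma row_collapse {n : ℕ} (z : Fin n → ℝ) (c : ℕ) (hc : c < n) (w : ℝ) :
    ∑ i : Fin n, (if (i : ℕ) = c then w else 0) * z i = w * z ⟨c, hc⟩ := by
  have h : ∀ i : Fin n, (if (i : ℕ) = c then w else 0) * z i
      = if i = (⟨c, hc⟩ : Fin n) then w * z i else 0 := by
    intro i
    by_cases hbc : (i : ℕ) = c <;> simp [hbc, Fin.ext_iff]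
  rw [Finset.sum_congr rfl fun i _ => h i, Finset.sum_ite_eq']
  simp

def cutG (x : Fin D → ℝ) (y : ℝ) (k : ℕ) : ℝ :=
  if h : k < D then -(cutDP D γ ι x ⟨k, h⟩)
  else if h2 : k < 2 * D then -(cutDM D γ ι x ⟨k - D, by omega⟩)
  else if k = 2 * D then max y 0 / (2 * M + 2)
  else if k = 2 * D + 1 then -(max (y - (2 * M + 2)) 0 / (2 * M + 2))
  else 0

lemma cut_hidden1 (x : Fin D → ℝ) (y : ℝ) (j : Fin (20 * D + 2)) :
    (cutNet D M γ ι).hidden 1 (Fin.snoc x y) j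
      = max (cutWt D γ (j : ℕ) *
          (Fin.snoc x y : Fin (D + 1) → ℝ) ⟨cutσ D (j : ℕ), cutσ_lt D (j : ℕ)⟩
          + cutB0 D M γ ι (j : ℕ)) 0 := by
  show max ((∑ i : Fin (D + 1),
      (if (i : ℕ) = cutσ D (j : ℕ) then cutWt D γ (j : ℕ) else 0)
        * (Fin.snoc x y : Fin (D + 1) → ℝ) i)
      + cutB0 D M γ ι (j : ℕ)) 0 = _
  rw [row_collapse]

lemma cut_term (x : Fin D → ℝ) (y : ℝ) (j : Fin (20 * D + 2)) :
    cutU D M (j : ℕ) * (cutNet D M γ ι).hidden 1 (Fin.snoc x y) j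
      = cutG D M γ ι x y (j : ℕ) := by
  rw [cut_hidden1, cut_snoc]
  rcases lt_or_ge (j : ℕ) D with hk | hk
  · have hσ : cutσ D (j : ℕ) = (j : ℕ) := if_pos hk
    have hσlt : cutσ D (j : ℕ) < D := by omega
    have hwt : cutWt D γ (j : ℕ) = 2 / γ := if_pos hk
    have hb : cutB0 D M γ ι (j : ℕ) = -((2 / γ) * ι ⟨(j : ℕ), hk⟩ + 1) := dif_pos hk
    have hu : cutU D M (j : ℕ) = -1 := if_pos (by omega)
    have hGv : cutG D M γ ι x y (j : ℕ) = -(cutDP D γ ι x ⟨(j : ℕ), hk⟩) := dif_pos hk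
    have hidx : (⟨cutσ D (j : ℕ), hσlt⟩ : Fin D) = ⟨(j : ℕ), hk⟩ := Fin.ext hσ
    rw [dif_pos hσlt, hidx, hwt, hb, hu, hGv]
    unfold cutDP
    rw [neg_one_mul, neg_inj]
    have harg : 2 / γ * x ⟨(j : ℕ), hk⟩ + -(2 / γ * ι ⟨(j : ℕ), hk⟩ + 1)
        = 2 / γ * x ⟨(j : ℕ), hk⟩ - (2 / γ * ι ⟨(j : ℕ), hk⟩ + 1) := by ring
    rw [harg]
  · rcases lt_or_ge (j : ℕ) (2 * D) with hk2 | hk2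
    · have hσ : cutσ D (j : ℕ) = (j : ℕ) - D := by
        unfold cutσ; rw [if_neg (by omega), if_pos hk2]
      have hσlt : cutσ D (j : ℕ) < D := by omega
      have hwt : cutWt D γ (j : ℕ) = -(2 / γ) := by
        unfold cutWt; rw [if_neg (by omega), if_pos hk2]
      have hb : cutB0 D M γ ι (j : ℕ) = cutβ D γ ι ⟨(j : ℕ) - D, by omega⟩ := by
        unfold cutB0; rw [dif_neg (by omega), dif_pos hk2]
      have hu : cutU D M (j : ℕ) = -1 := if_pos hk2
      have hGv : cutG D M γ ι x y (j : ℕ) = -(cutDM D γ ι x ⟨(j : ℕ) - D, by omega⟩) := by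
        unfold cutG; rw [dif_neg (by omega), dif_pos hk2]
      have hidx : (⟨cutσ D (j : ℕ), hσlt⟩ : Fin D) = ⟨(j : ℕ) - D, by omega⟩ := Fin.ext hσ
      rw [dif_pos hσlt, hidx, hwt, hb, hu, hGv]
      unfold cutDM
      rw [neg_one_mul, neg_inj, neg_mul]
    · rcases eq_or_ne (j : ℕ) (2 * D) with hk3 | hk3
      · have hσlt : ¬ cutσ D (j : ℕ) < D := by
          unfold cutσ
          split
          · omega
          · split <;> omega
        have hwt : cutWt D γ (j : ℕ) = 1 := by
          unfold cutWt; rw [if_neg (by omega), if_neg (by omega), if_pos (by omega)]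
        have hb : cutB0 D M γ ι (j : ℕ) = 0 := by
          unfold cutB0; rw [dif_neg (by omega), dif_neg (by omega), if_pos hk3]
        have hu : cutU D M (j : ℕ) = 1 / (2 * M + 2) := by
          unfold cutU; rw [if_neg (by omega), if_pos hk3]
        have hGv : cutG D M γ ι x y (j : ℕ) = max y 0 / (2 * M + 2) := by
          unfold cutG; rw [dif_neg (by omega), dif_neg (by omega), if_pos hk3]
        rw [dif_neg hσlt, hwt, hb, hu, hGv, one_mul, add_zero]
        ring
      · rcases eq_or_ne (j : ℕ) (2 * D + 1) with hk4 | hk4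
        · have hσlt : ¬ cutσ D (j : ℕ) < D := by
            unfold cutσ
            split
            · omega
            · split <;> omega
          have hwt : cutWt D γ (j : ℕ) = 1 := by
            unfold cutWt; rw [if_neg (by omega), if_neg (by omega), if_pos (by omega)]
          have hb : cutB0 D M γ ι (j : ℕ) = -(2 * M + 2) := by
            unfold cutB0; rw [dif_neg (by omega), dif_neg (by omega), if_neg hk3, if_pos hk4]
          have hu : cutU D M (j : ℕ) = -(1 / (2 * M + 2)) := by
            unfold cutU; rw [if_neg (by omega), if_neg hk3, if_pos hk4]
          have hGv : cutG D M γ ι x y (j : ℕ)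
              = -(max (y - (2 * M + 2)) 0 / (2 * M + 2)) := by
            unfold cutG; rw [dif_neg (by omega), dif_neg (by omega), if_neg hk3, if_pos hk4]
          rw [dif_neg hσlt, hwt, hb, hu, hGv, one_mul]
          have harg : y + -(2 * M + 2) = y - (2 * M + 2) := by ring
          rw [harg]
          ring
        · have hu : cutU D M (j : ℕ) = 0 := by
            unfold cutU; rw [if_neg (by omega), if_neg hk3, if_neg hk4]
          have hGv : cutG D M γ ι x y (j : ℕ) = 0 := by
            unfold cutG
            rw [dif_neg (by omega), dif_neg (by omega), if_neg hk3, if_neg hk4]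
          rw [hu, zero_mul, hGv]

lemma cut_realize (x : Fin D → ℝ) (y : ℝ) :
    (cutNet D M γ ι).realize (Fin.snoc x y) (0 : Fin 1) =
      (2 * M + 2) * max ((max y 0 - max (y - (2 * M + 2)) 0) / (2 * M + 2)
          - ∑ ℓ, (cutDP D γ ι x ℓ + cutDM D γ ι x ℓ)) 0 := by
  have h2 : (cutNet D M γ ι).hidden 2 (Fin.snoc x y) (0 : Fin 1)
      = max ((max y 0 - max (y - (2 * M + 2)) 0) / (2 * M + 2)
          - ∑ ℓ, (cutDP D γ ι x ℓ + cutDM D γ ι x ℓ)) 0 := by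
    show max ((∑ j : Fin (20 * D + 2),
        cutU D M (j : ℕ) * (cutNet D M γ ι).hidden 1 (Fin.snoc x y) j) + 0) 0 = _
    rw [add_zero]
    congr 1
    calc ∑ j : Fin (20 * D + 2), cutU D M (j : ℕ) * (cutNet D M γ ι).hidden 1 (Fin.snoc x y) j
        = ∑ j : Fin (20 * D + 2), cutG D M γ ι x y (j : ℕ) :=
          Finset.sum_congr rfl fun j _ => cut_term D M γ ι x y j
      _ = ∑ k ∈ Finset.range (20 * D + 2), cutG D M γ ι x y k :=
          Fin.sum_univ_eq_sum_range (cutG D M γ ι x y) _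
      _ = ∑ k ∈ Finset.range (2 * D + 2), cutG D M γ ι x y k := by
          refine (Finset.sum_subset (Finset.range_subset_range.2 (by omega)) ?_).symm
          intro k _ hk
          rw [Finset.mem_range, not_lt] at hk
          unfold cutG
          rw [dif_neg (by omega), dif_neg (by omega), if_neg (by omega), if_neg (by omega)]
      _ = (∑ k ∈ Finset.range (2 * D), cutG D M γ ι x y k)
            + cutG D M γ ι x y (2 * D) + cutG D M γ ι x y (2 * D + 1) := by
          rw [show 2 * D + 2 = (2 * D + 1) + 1 by omega, Finset.sum_range_succ,
            Finset.sum_range_succ]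
      _ = _ := by
          rw [show 2 * D = D + D by omega, Finset.sum_range_add]
          have hdp : ∑ k ∈ Finset.range D, cutG D M γ ι x y k
              = -∑ ℓ : Fin D, cutDP D γ ι x ℓ := by
            rw [← Fin.sum_univ_eq_sum_range, ← Finset.sum_neg_distrib]
            refine Finset.sum_congr rfl fun i _ => ?_
            have hidx : (⟨(i : ℕ), i.isLt⟩ : Fin D) = i := Fin.ext rfl
            unfold cutG
            rw [dif_pos i.isLt, hidx]
          have hdm : ∑ k ∈ Finset.range D, cutG D M γ ι x y (D + k)
              = -∑ ℓ : Fin D, cutDM D γ ι x ℓ := by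
            rw [← Fin.sum_univ_eq_sum_range (fun k => cutG D M γ ι x y (D + k)),
              ← Finset.sum_neg_distrib]
            refine Finset.sum_congr rfl fun i _ => ?_
            have hlt : D + (i : ℕ) < 2 * D := by omega
            have hidx : (⟨D + (i : ℕ) - D, by omega⟩ : Fin D) = i := Fin.ext (by simp)
            unfold cutG
            rw [dif_neg (by omega), dif_pos hlt, hidx]
          have hG2D : cutG D M γ ι x y (D + D) = max y 0 / (2 * M + 2) := by
            unfold cutG
            rw [dif_neg (by omega), dif_neg (by omega), if_pos (by omega)]
          have hG2D1 : cutG D M γ ι x y (D + D + 1)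
              = -(max (y - (2 * M + 2)) 0 / (2 * M + 2)) := by
            unfold cutG
            rw [dif_neg (by omega), dif_neg (by omega), if_neg (by omega), if_pos (by omega)]
          rw [hdp, hdm, hG2D, hG2D1, Finset.sum_add_distrib]
          ring
  show (∑ j : Fin 1, (2 * M + 2) * (cutNet D M γ ι).hidden 2 (Fin.snoc x y) j) + 0 = _
  rw [add_zero, Fin.sum_univ_one, h2]

lemma cutWt_ne (hγ : 0 < γ) (k : ℕ) : cutWt D γ k ≠ 0 ↔ k < 2 * D + 2 := by
  have hg : (2 : ℝ) / γ ≠ 0 := ne_of_gt (by positivity)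
  unfold cutWt
  split
  · next h => exact iff_of_true hg (by omega)
  · split
    · next h h2 => exact iff_of_true (neg_ne_zero.2 hg) (by omega)
    · split
      · next h h2 h3 => exact iff_of_true one_ne_zero (by omega)
      · next h h2 h3 => exact iff_of_false (by simp) (by omega)

lemma cutU_ne (hM : 0 < M) (k : ℕ) : cutU D M k ≠ 0 ↔ k < 2 * D + 2 := by
  have hc : (1 : ℝ) / (2 * M + 2) ≠ 0 := ne_of_gt (by positivity)
  unfold cutU
  split
  · next h => exact iff_of_true (by norm_num) (by omega)
  · split
    · next h h2 => exact iff_of_true hc (by omega)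
    · split
      · next h h2 h3 => exact iff_of_true (neg_ne_zero.2 hc) (by omega)
      · next h h2 h3 => exact iff_of_false (by simp) (by omega)

lemma cutβ_ne (hγ : 0 < γ) (ℓ : Fin D) : cutβ D γ ι ℓ ≠ 0 := by
  have hg : (0 : ℝ) < 2 / γ := by positivity
  unfold cutβ
  split
  · norm_num
  · next hne =>
    have heq : 2 / γ * ι ℓ - 1 = 2 / γ * (ι ℓ - γ / 2) := by
      field_simp
    rw [heq]
    exact mul_ne_zero (ne_of_gt hg) (sub_ne_zero.2 hne)

lemma cutB0_ne (hM : 0 < M) (hγ : 0 < γ) (hpos : ∀ ℓ : Fin D, 0 ≤ ι ℓ) (k : ℕ) :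
    cutB0 D M γ ι k ≠ 0 ↔ k ≠ 2 * D := by
  have hg : (0 : ℝ) < 2 / γ := by positivity
  unfold cutB0
  split
  · next h =>
    have h1 : (0 : ℝ) ≤ 2 / γ * ι ⟨k, h⟩ := mul_nonneg (le_of_lt hg) (hpos _)
    exact iff_of_true (by intro hz; nlinarith) (by omega)
  · split
    · next h h2 => exact iff_of_true (cutβ_ne D γ ι hγ _) (by omega)
    · split
      · next h h2 h3 => exact iff_of_false (by simp) (by omega)
      · split
        · next h h2 h3 h4 =>
          exact iff_of_true (by intro hz; nlinarith) (by omega)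
        · next h h2 h3 h4 => exact iff_of_true one_ne_zero (by omega)

lemma cutA0_card (hγ : 0 < γ) :
    {ij : Fin ((cutNet D M γ ι).p (0 + 1)) × Fin ((cutNet D M γ ι).p 0) |
      (cutNet D M γ ι).A 0 ij.1 ij.2 ≠ 0}.ncard = 2 * D + 2 := by
  show {ij : Fin (20 * D + 2) × Fin (D + 1) |
      (if ((ij.2 : ℕ) = cutσ D (ij.1 : ℕ)) then cutWt D γ (ij.1 : ℕ) else 0) ≠ 0}.ncard
      = 2 * D + 2
  have hinj : Function.Injective (fun k : Fin (2 * D + 2) =>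
      ((⟨(k : ℕ), by omega⟩ : Fin (20 * D + 2)),
        (⟨cutσ D (k : ℕ), cutσ_lt D (k : ℕ)⟩ : Fin (D + 1)))) := by
    intro a b hab
    have := congrArg (fun q => ((q.1 : Fin (20 * D + 2)) : ℕ)) hab
    exact Fin.ext this
  have hset : {ij : Fin (20 * D + 2) × Fin (D + 1) |
      (if ((ij.2 : ℕ) = cutσ D (ij.1 : ℕ)) then cutWt D γ (ij.1 : ℕ) else 0) ≠ 0}
      = Set.range (fun k : Fin (2 * D + 2) =>
        ((⟨(k : ℕ), by omega⟩ : Fin (20 * D + 2)),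
          (⟨cutσ D (k : ℕ), cutσ_lt D (k : ℕ)⟩ : Fin (D + 1)))) := by
    ext q
    simp only [Set.mem_setOf_eq, Set.mem_range]
    constructor
    · intro h
      by_cases hc : (q.2 : ℕ) = cutσ D (q.1 : ℕ)
      · rw [if_pos hc] at h
        have hi : (q.1 : ℕ) < 2 * D + 2 := (cutWt_ne D γ hγ _).1 h
        refine ⟨⟨(q.1 : ℕ), hi⟩, ?_⟩
        refine Prod.ext (Fin.ext rfl) (Fin.ext ?_)
        simpa using hc.symm
      · rw [if_neg hc] at h
        exact absurd rfl h
    · rintro ⟨k, rfl⟩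
      rw [if_pos rfl]
      exact (cutWt_ne D γ hγ (k : ℕ)).2 k.isLt
  rw [hset, ← Set.image_univ, Set.ncard_image_of_injective _ hinj, Set.ncard_univ,
    Nat.card_eq_fintype_card, Fintype.card_fin]

lemma cutb0_card (hM : 0 < M) (hγ : 0 < γ) (hpos : ∀ ℓ : Fin D, 0 ≤ ι ℓ) :
    {i : Fin ((cutNet D M γ ι).p (0 + 1)) | (cutNet D M γ ι).b 0 i ≠ 0}.ncard
      = 20 * D + 1 := by
  show {i : Fin (20 * D + 2) | cutB0 D M γ ι (i : ℕ) ≠ 0}.ncard = 20 * D + 1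
  have hset : {i : Fin (20 * D + 2) | cutB0 D M γ ι (i : ℕ) ≠ 0}
      = ({(⟨2 * D, by omega⟩ : Fin (20 * D + 2))} : Set (Fin (20 * D + 2)))ᶜ := by
    ext i
    simp only [Set.mem_setOf_eq, Set.mem_compl_iff, Set.mem_singleton_iff]
    rw [cutB0_ne D M γ ι hM hγ hpos]
    simp [Fin.ext_iff]
  rw [hset]
  have h := Set.ncard_add_ncard_compl
    ({(⟨2 * D, by omega⟩ : Fin (20 * D + 2))} : Set (Fin (20 * D + 2)))
  rw [Set.ncard_singleton, Nat.card_eq_fintype_card, Fintype.card_fin] at h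
  omega

lemma cutA1_card (hM : 0 < M) :
    {ij : Fin ((cutNet D M γ ι).p (1 + 1)) × Fin ((cutNet D M γ ι).p 1) |
      (cutNet D M γ ι).A 1 ij.1 ij.2 ≠ 0}.ncard = 2 * D + 2 := by
  show {ij : Fin 1 × Fin (20 * D + 2) | cutU D M ((ij.2 : Fin (20 * D + 2)) : ℕ) ≠ 0}.ncard
      = 2 * D + 2
  have hinj : Function.Injective (fun k : Fin (2 * D + 2) =>
      ((0 : Fin 1), (⟨(k : ℕ), by omega⟩ : Fin (20 * D + 2)))) := by
    intro a b hab
    have := congrArg (fun q => ((q.2 : Fin (20 * D + 2)) : ℕ)) hab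
    exact Fin.ext this
  have hset : {ij : Fin 1 × Fin (20 * D + 2) | cutU D M ((ij.2 : Fin (20 * D + 2)) : ℕ) ≠ 0}
      = Set.range (fun k : Fin (2 * D + 2) =>
        ((0 : Fin 1), (⟨(k : ℕ), by omega⟩ : Fin (20 * D + 2)))) := by
    ext q
    simp only [Set.mem_setOf_eq, Set.mem_range]
    constructor
    · intro h
      have hj : (q.2 : ℕ) < 2 * D + 2 := (cutU_ne D M hM _).1 h
      exact ⟨⟨(q.2 : ℕ), hj⟩, Prod.ext (Subsingleton.elim _ _) (Fin.ext rfl)⟩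
    · rintro ⟨k, rfl⟩
      exact (cutU_ne D M hM (k : ℕ)).2 k.isLt
  rw [hset, ← Set.image_univ, Set.ncard_image_of_injective _ hinj, Set.ncard_univ,
    Nat.card_eq_fintype_card, Fintype.card_fin]

lemma cutb1_card :
    {i : Fin ((cutNet D M γ ι).p (1 + 1)) | (cutNet D M γ ι).b 1 i ≠ 0}.ncard = 0 := by
  show {i : Fin 1 | (0 : ℝ) ≠ 0}.ncard = 0
  simp

lemma cutA2_card (hM : 0 < M) :
    {ij : Fin ((cutNet D M γ ι).p (2 + 1)) × Fin ((cutNet D M γ ι).p 2) |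
      (cutNet D M γ ι).A 2 ij.1 ij.2 ≠ 0}.ncard = 1 := by
  show {ij : Fin 1 × Fin 1 | (2 * M + 2 : ℝ) ≠ 0}.ncard = 1
  have hne : (2 * M + 2 : ℝ) ≠ 0 := by positivity
  have hset : {ij : Fin 1 × Fin 1 | (2 * M + 2 : ℝ) ≠ 0} = Set.univ :=
    Set.eq_univ_of_forall fun _ => hne
  rw [hset, Set.ncard_univ, Nat.card_eq_fintype_card]
  simp

lemma cutb2_card :
    {i : Fin ((cutNet D M γ ι).p (2 + 1)) | (cutNet D M γ ι).b 2 i ≠ 0}.ncard = 0 := by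
  show {i : Fin 1 | (0 : ℝ) ≠ 0}.ncard = 0
  simp

lemma cut_numParams (hM : 0 < M) (hγ : 0 < γ) (hpos : ∀ ℓ : Fin D, 0 ≤ ι ℓ) :
    (cutNet D M γ ι).numParams = 24 * D + 6 := by
  show ∑ ℓ ∈ Finset.range 3,
      ({ij : Fin ((cutNet D M γ ι).p (ℓ + 1)) × Fin ((cutNet D M γ ι).p ℓ) |
          (cutNet D M γ ι).A ℓ ij.1 ij.2 ≠ 0}.ncard
        + {i : Fin ((cutNet D M γ ι).p (ℓ + 1)) | (cutNet D M γ ι).b ℓ i ≠ 0}.ncard)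
      = 24 * D + 6
  rw [Finset.sum_range_succ, Finset.sum_range_succ, Finset.sum_range_succ,
    Finset.sum_range_zero, cutA0_card D M γ ι hγ, cutb0_card D M γ ι hM hγ hpos,
    cutA1_card D M γ ι hM, cutb1_card D M γ ι, cutA2_card D M γ ι hM, cutb2_card D M γ ι]
  omega

lemma mem_centerCube_iff (x : Fin D → ℝ) :
    x ∈ centerCube ι γ ↔ ∀ ℓ, ι ℓ - γ / 2 ≤ x ℓ ∧ x ℓ ≤ ι ℓ + γ / 2 := by
  constructor
  · intro h ℓ
    exact h ℓ (Set.mem_univ ℓ)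
  · intro h ℓ _
    exact h ℓ

lemma mem_unitCube_iff (x : Fin D → ℝ) :
    x ∈ unitCube D ↔ ∀ ℓ, 0 ≤ x ℓ ∧ x ℓ ≤ 1 := by
  constructor
  · intro h ℓ
    exact h ℓ (Set.mem_univ ℓ)
  · intro h ℓ _
    exact h ℓ

lemma cut_maxParam (hM : 0 < M) (hγ : 0 < γ)
    (hb : ∀ ℓ : Fin D, γ / 2 ≤ ι ℓ ∧ ι ℓ + γ / 2 ≤ 1) :
    (cutNet D M γ ι).maxParam ≤
      max 1 (max (2 * M + 2) (max (1 / (2 * M + 2)) (max (D : ℝ) (max (1 + γ) (2 / γ))))) := by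
  set B := max (1:ℝ) (max (2 * M + 2) (max (1 / (2 * M + 2)) (max (D : ℝ) (max (1 + γ) (2 / γ)))))
    with hBdef
  have hB1 : (1 : ℝ) ≤ B := le_max_left _ _
  have hBc : 2 * M + 2 ≤ B := le_trans (le_max_left _ _) (le_max_right _ _)
  have hBi : 1 / (2 * M + 2) ≤ B :=
    le_trans (le_trans (le_max_left _ _) (le_max_right _ _)) (le_max_right _ _)
  have hBg : 2 / γ ≤ B :=
    le_trans (le_trans (le_trans (le_trans (le_max_right (1 + γ) _) (le_max_right (D:ℝ) _))
      (le_max_right (1 / (2 * M + 2)) _)) (le_max_right (2 * M + 2) _)) (le_max_right 1 _)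
  have hB0 : (0 : ℝ) ≤ B := le_trans zero_le_one hB1
  have hg0 : (0 : ℝ) ≤ 2 / γ := by positivity
  have hγγ : 2 / γ * (γ / 2) = 1 := by field_simp
  refine Real.sSup_le ?_ hB0
  rintro r ⟨ℓ, hℓ, hr⟩
  have hℓ2 : ℓ ≤ 2 := hℓ
  interval_cases ℓ
  · rcases hr with ⟨i, j, rfl⟩ | ⟨i, rfl⟩
    · show |if ((j : ℕ) = cutσ D (i : ℕ)) then cutWt D γ (i : ℕ) else 0| ≤ B
      split
      · unfold cutWt
        split
        · rw [abs_of_nonneg hg0]; exact hBg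
        · split
          · rw [abs_neg, abs_of_nonneg hg0]; exact hBg
          · split
            · rw [abs_one]; exact hB1
            · rw [abs_zero]; exact hB0
      · rw [abs_zero]; exact hB0
    · show |cutB0 D M γ ι (i : ℕ)| ≤ B
      unfold cutB0
      split
      · next h =>
        obtain ⟨hb1, hb2⟩ := hb ⟨(i : ℕ), h⟩
        have hmul := mul_le_mul_of_nonneg_left (show ι ⟨(i:ℕ), h⟩ ≤ 1 - γ / 2 by linarith) hg0
        have hexp : 2 / γ * (1 - γ / 2) = 2 / γ - 1 := by
          field_simp
        have hnn : (0:ℝ) ≤ 2 / γ * ι ⟨(i:ℕ), h⟩ + 1 := by nlinarith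
        rw [abs_neg, abs_of_nonneg hnn]
        linarith
      · split
        · next h h2 =>
          unfold cutβ
          split
          · rw [abs_neg, abs_one]; exact hB1
          · obtain ⟨hb1, hb2⟩ := hb ⟨(i : ℕ) - D, by omega⟩
            have hmul1 := mul_le_mul_of_nonneg_left hb1 hg0
            rw [hγγ] at hmul1
            have hmul2 := mul_le_mul_of_nonneg_left
              (show ι ⟨(i:ℕ) - D, by omega⟩ ≤ 1 - γ / 2 by linarith) hg0
            have hexp : 2 / γ * (1 - γ / 2) = 2 / γ - 1 := by field_simp
            rw [abs_of_nonneg (by linarith)]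
            linarith
        · split
          · rw [abs_zero]; exact hB0
          · split
            · rw [abs_neg, abs_of_nonneg (by linarith)]; exact hBc
            · rw [abs_one]; exact hB1
  · rcases hr with ⟨i, j, rfl⟩ | ⟨i, rfl⟩
    · show |cutU D M ((j : Fin (20 * D + 2)) : ℕ)| ≤ B
      unfold cutU
      split
      · rw [abs_neg, abs_one]; exact hB1
      · split
        · rw [abs_of_nonneg (by positivity)]; exact hBi
        · split
          · rw [abs_neg, abs_of_nonneg (by positivity)]; exact hBi
          · rw [abs_zero]; exact hB0
    · show |(0 : ℝ)| ≤ B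
      rw [abs_zero]; exact hB0
  · rcases hr with ⟨i, j, rfl⟩ | ⟨i, rfl⟩
    · show |2 * M + 2| ≤ B
      rw [abs_of_nonneg (by linarith)]; exact hBc
    · show |(0 : ℝ)| ≤ B
      rw [abs_zero]; exact hB0

lemma cutDP_nonneg (x : Fin D → ℝ) (ℓ : Fin D) : 0 ≤ cutDP D γ ι x ℓ := by
  unfold cutDP; exact le_max_right _ _

lemma cutDM_nonneg (x : Fin D → ℝ) (ℓ : Fin D) : 0 ≤ cutDM D γ ι x ℓ := by
  unfold cutDM; exact le_max_right _ _

lemma le_cutDP (x : Fin D → ℝ) (ℓ : Fin D) :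
    2 / γ * x ℓ - (2 / γ * ι ℓ + 1) ≤ cutDP D γ ι x ℓ := by
  unfold cutDP; exact le_max_left _ _

lemma le_cutDM (x : Fin D → ℝ) (ℓ : Fin D) :
    -(2 / γ * x ℓ) + cutβ D γ ι ℓ ≤ cutDM D γ ι x ℓ := by
  unfold cutDM; exact le_max_left _ _

end CutAux

/-- The trapezoid-type "cut" network. -/
theorem cut_network_exists
    (D : ℕ) (M γ : ℝ) (hM : 0 < M) (hγ : 0 < γ)
    (ι : Fin D → ℝ) (hI : centerCube ι γ ⊆ unitCube D) :
    ∃ (Φ : NeuralNet) (h0 : Φ.p 0 = D + 1) (h1 : Φ.p (Φ.Lm + 1) = 1),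
      Φ.numParams = 24 * D + 6 ∧ Φ.depth = 3 ∧
      Φ.maxParam ≤
        max 1 (max (2 * M + 2) (max (1 / (2 * M + 2)) (max (D : ℝ) (max (1 + γ) (2 / γ))))) ∧
      (∀ y ∈ Set.Icc (0:ℝ) (2 * M + 2), ∀ x ∈ centerCube ι γ,
        Φ.realize (fun i => (Fin.snoc x y : Fin (D + 1) → ℝ) (Fin.cast h0 i)) (Fin.cast h1.symm 0) = y) ∧
      (∀ y ∈ Set.Icc (0:ℝ) (2 * M + 2), ∀ x ∈ unitCube D,
        x ∈ expandSet (centerCube ι γ) (γ / 2) →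
          0 ≤ Φ.realize (fun i => (Fin.snoc x y : Fin (D + 1) → ℝ) (Fin.cast h0 i)) (Fin.cast h1.symm 0) ∧
          Φ.realize (fun i => (Fin.snoc x y : Fin (D + 1) → ℝ) (Fin.cast h0 i)) (Fin.cast h1.symm 0) ≤ y) ∧
      (∀ y : ℝ, 0 ≤ y → ∀ x ∈ unitCube D,
        x ∉ expandSet (centerCube ι γ) (γ / 2) →
          Φ.realize (fun i => (Fin.snoc x y : Fin (D + 1) → ℝ) (Fin.cast h0 i)) (Fin.cast h1.symm 0) = 0) := by
  have hc0 : (0:ℝ) < 2 * M + 2 := by linarith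
  have hg0 : (0:ℝ) ≤ 2 / γ := by positivity
  have hγγ : 2 / γ * (γ / 2) = 1 := by field_simp
  have hγ2 : 2 / γ * γ = 2 := by field_simp
  have hbound : ∀ ℓ : Fin D, γ / 2 ≤ ι ℓ ∧ ι ℓ + γ / 2 ≤ 1 := by
    intro ℓ
    have hmem1 : (fun m => ι m - γ / 2) ∈ centerCube ι γ :=
      (mem_centerCube_iff D γ ι _).2 fun m => ⟨le_rfl, by linarith⟩
    have hmem2 : (fun m => ι m + γ / 2) ∈ centerCube ι γ :=
      (mem_centerCube_iff D γ ι _).2 fun m => ⟨by linarith, le_rfl⟩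
    have h1 := (mem_unitCube_iff D _).1 (hI hmem1) ℓ
    have h2 := (mem_unitCube_iff D _).1 (hI hmem2) ℓ
    constructor
    · have := h1.1
      linarith
    · have := h2.2
      linarith
  have hfar : ∀ x : Fin D → ℝ, x ∉ expandSet (centerCube ι γ) (γ / 2) →
      ∃ ℓ : Fin D, x ℓ ≤ ι ℓ - γ ∨ ι ℓ + γ ≤ x ℓ := by
    intro x hnot
    by_contra hcon
    push_neg at hcon
    apply hnot
    have hz : (fun m => max (ι m - γ / 2) (min (x m) (ι m + γ / 2))) ∈ centerCube ι γ :=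
      (mem_centerCube_iff D γ ι _).2 fun m =>
        ⟨le_max_left _ _, max_le (by linarith) (min_le_right _ _)⟩
    refine Set.mem_biUnion hz ?_
    rw [Metric.mem_ball, dist_pi_lt_iff (by linarith)]
    intro m
    obtain ⟨h1, h2⟩ := hcon m
    show dist (x m) (max (ι m - γ / 2) (min (x m) (ι m + γ / 2))) < γ / 2
    rw [Real.dist_eq, abs_sub_lt_iff]
    rcases le_total (x m) (ι m - γ / 2) with hle | hle
    · rw [min_eq_left (by linarith), max_eq_left (by linarith [min_le_left (x m) (ι m + γ / 2)])]
      constructor <;> linarith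
    · rcases le_total (ι m + γ / 2) (x m) with hle2 | hle2
      · rw [min_eq_right hle2, max_eq_right (by linarith)]
        constructor <;> linarith
      · rw [min_eq_left hle2, max_eq_right hle]
        constructor <;> linarith
  refine ⟨cutNet D M γ ι, rfl, rfl,
    cut_numParams D M γ ι hM hγ (fun ℓ => by linarith [(hbound ℓ).1]), rfl,
    cut_maxParam D M γ ι hM hγ hbound, ?_, ?_, ?_⟩
  · -- identity on the cube
    intro y hy x hx
    show (cutNet D M γ ι).realize (Fin.snoc x y) (0 : Fin 1) = y
    rw [cut_realize]
    obtain ⟨hy0, hy1⟩ := hy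
    have hx' := (mem_centerCube_iff D γ ι x).1 hx
    have hdp : ∀ ℓ, cutDP D γ ι x ℓ = 0 := by
      intro ℓ
      unfold cutDP
      apply max_eq_right
      have h2 := mul_le_mul_of_nonneg_left (hx' ℓ).2 hg0
      rw [mul_add, hγγ] at h2
      linarith
    have hβle : ∀ ℓ, cutβ D γ ι ℓ ≤ 2 / γ * ι ℓ - 1 := by
      intro ℓ
      unfold cutβ
      split
      · next h =>
        rw [h, hγγ]
        norm_num
      · exact le_rfl
    have hdm : ∀ ℓ, cutDM D γ ι x ℓ = 0 := by
      intro ℓ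
      unfold cutDM
      apply max_eq_right
      have h2 := mul_le_mul_of_nonneg_left (hx' ℓ).1 hg0
      rw [mul_sub, hγγ] at h2
      have := hβle ℓ
      linarith
    rw [Finset.sum_eq_zero (fun ℓ _ => by rw [hdp ℓ, hdm ℓ, add_zero]), sub_zero,
      max_eq_right (show y - (2 * M + 2) ≤ (0:ℝ) by linarith), sub_zero,
      max_eq_left hy0, max_eq_left (div_nonneg hy0 (le_of_lt hc0))]
    field_simp
  · -- squeezed between 0 and y
    intro y hy x hx hxe
    show 0 ≤ (cutNet D M γ ι).realize (Fin.snoc x y) (0 : Fin 1) ∧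
      (cutNet D M γ ι).realize (Fin.snoc x y) (0 : Fin 1) ≤ y
    rw [cut_realize]
    obtain ⟨hy0, hy1⟩ := hy
    constructor
    · exact mul_nonneg (le_of_lt hc0) (le_max_right _ _)
    · have hsum : 0 ≤ ∑ ℓ, (cutDP D γ ι x ℓ + cutDM D γ ι x ℓ) :=
        Finset.sum_nonneg fun ℓ _ => add_nonneg (cutDP_nonneg D γ ι x ℓ) (cutDM_nonneg D γ ι x ℓ)
      rw [max_eq_right (show y - (2 * M + 2) ≤ (0:ℝ) by linarith), sub_zero, max_eq_left hy0]
      have h1 : max (y / (2 * M + 2) - ∑ ℓ, (cutDP D γ ι x ℓ + cutDM D γ ι x ℓ)) 0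
          ≤ y / (2 * M + 2) :=
        max_le (by linarith) (div_nonneg hy0 (le_of_lt hc0))
      calc (2 * M + 2) * max (y / (2 * M + 2) - ∑ ℓ, (cutDP D γ ι x ℓ + cutDM D γ ι x ℓ)) 0
          ≤ (2 * M + 2) * (y / (2 * M + 2)) := mul_le_mul_of_nonneg_left h1 (by linarith)
        _ = y := by field_simp
  · -- zero far away
    intro y hy0 x hx hxe
    show (cutNet D M γ ι).realize (Fin.snoc x y) (0 : Fin 1) = 0
    rw [cut_realize]
    obtain ⟨ℓ0, hfar0⟩ := hfar x hxe
    have hx' := (mem_unitCube_iff D x).1 hx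
    have hone : 1 ≤ cutDP D γ ι x ℓ0 + cutDM D γ ι x ℓ0 := by
      have hdp0 : (0:ℝ) ≤ cutDP D γ ι x ℓ0 := cutDP_nonneg D γ ι x ℓ0
      have hdm0 : (0:ℝ) ≤ cutDM D γ ι x ℓ0 := cutDM_nonneg D γ ι x ℓ0
      rcases hfar0 with h | h
      · have hιγ : γ ≤ ι ℓ0 := by linarith [(hx' ℓ0).1]
        have hβv : cutβ D γ ι ℓ0 = 2 / γ * ι ℓ0 - 1 := by
          unfold cutβ
          rw [if_neg (show ι ℓ0 ≠ γ / 2 by intro he; rw [he] at hιγ; linarith)]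
        have hmul := mul_le_mul_of_nonneg_left (show γ ≤ ι ℓ0 - x ℓ0 by linarith) hg0
        rw [mul_sub, hγ2] at hmul
        have harg : 1 ≤ -(2 / γ * x ℓ0) + cutβ D γ ι ℓ0 := by
          rw [hβv]; linarith
        have : 1 ≤ cutDM D γ ι x ℓ0 := le_trans harg (le_cutDM D γ ι x ℓ0)
        linarith
      · have hmul := mul_le_mul_of_nonneg_left h hg0
        rw [mul_add, hγ2] at hmul
        have harg : 1 ≤ 2 / γ * x ℓ0 - (2 / γ * ι ℓ0 + 1) := by linarith
        have : 1 ≤ cutDP D γ ι x ℓ0 := le_trans harg (le_cutDP D γ ι x ℓ0)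
        linarith
    have hsum : 1 ≤ ∑ ℓ, (cutDP D γ ι x ℓ + cutDM D γ ι x ℓ) :=
      le_trans hone (Finset.single_le_sum
        (fun i _ => add_nonneg (cutDP_nonneg D γ ι x i) (cutDM_nonneg D γ ι x i))
        (Finset.mem_univ ℓ0))
    have hq : max y 0 - max (y - (2 * M + 2)) 0 ≤ 2 * M + 2 := by
      have h1 := le_max_left (y - (2 * M + 2)) (0:ℝ)
      rw [max_eq_left hy0]
      linarith
    have hdiv : (max y 0 - max (y - (2 * M + 2)) 0) / (2 * M + 2) ≤ 1 :=
      (div_le_one hc0).2 hq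
    rw [max_eq_right (show (max y 0 - max (y - (2 * M + 2)) 0) / (2 * M + 2)
      - ∑ ℓ, (cutDP D γ ι x ℓ + cutDM D γ ι x ℓ) ≤ (0:ℝ) by linarith), mul_zero]
end
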